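/- arXiv:1704.04083 — 13 statements merged into one kernel-verified Lean document; each statement's English description precedes it below -/
import Mathlib

section
/- Let F be a field and let G be a k × n matrix over F whose rows span the linear code C ⊆ F^n and which has rank k. Then det(G Gᵀ) ≠ 0 if and only if C is an LCD code, i.e., C ∩ C^⊥ = {0}. -/
/-!
Write `C` for the row space of `G`, so `C = {v ᵥ* G}`. A codeword `v ᵥ* G` is orthogonal to
every row of `G`, hence lies in `C^⊥`, exactly when `G *ᵥ (Gᵀ *ᵥ v) = (G * Gᵀ) *ᵥ v` vanishes.
Thus `C ∩ C^⊥` is the image of `ker (G * Gᵀ)` under `v ↦ v ᵥ* G`, which is injective because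
`G` has independent rows; so `C` is LCD iff `G * Gᵀ` has trivial kernel, iff its determinant
is nonzero.
-/

/-- The Euclidean dual of a code `C ⊆ R^n`:
`C^⊥ = {x : x · c = 0 for all c ∈ C}` where `x · y = ∑ i, x i * y i`. -/
def dualCode {R : Type*} [CommRing R] {n : ℕ} (C : Submodule R (Fin n → R)) :
    Submodule R (Fin n → R) where
  carrier := {x | ∀ c ∈ C, ∑ i, x i * c i = 0}
  zero_mem' := by intro c hc; simp
  add_mem' := by
    intro a b ha hb c hc
    have h1 := ha c hc
    have h2 := hb c hc
    simp only [Pi.add_apply, add_mul, Finset.sum_add_distrib, h1, h2, add_zero]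
  smul_mem' := by
    intro r x hx c hc
    have h1 := hx c hc
    simp only [Pi.smul_apply, smul_eq_mul, mul_assoc, ← Finset.mul_sum, h1, mul_zero]

/-- A code is LCD (linear complementary dual) if `C ∩ C^⊥ = {0}`. -/
def IsLCD {R : Type*} [CommRing R] {n : ℕ} (C : Submodule R (Fin n → R)) : Prop :=
  C ⊓ dualCode C = ⊥

open Matrix Submodule

section

variable {R : Type*} [CommRing R] {n : ℕ}

theorem mem_dualCode_iff_le_ker_dotProduct {C : Submodule R (Fin n → R)} {x : Fin n → R} :
    x ∈ dualCode C ↔ C ≤ LinearMap.ker (dotProductBilin R R x) :=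
  Iff.rfl

theorem mem_dualCode_span_range_row_iff {ι : Type*} (G : Matrix ι (Fin n) R) (x : Fin n → R) :
    x ∈ dualCode (span R (Set.range G.row)) ↔ G *ᵥ x = 0 := by
  rw [mem_dualCode_iff_le_ker_dotProduct, span_le, Set.range_subset_iff, funext_iff]
  simp [mulVec, dotProduct_comm, row_apply']

variable {ι : Type*} [Fintype ι]

theorem span_range_row_inf_dualCode_eq_map_ker (G : Matrix ι (Fin n) R) :
    span R (Set.range G.row) ⊓ dualCode (span R (Set.range G.row)) =
      (LinearMap.ker (G * Gᵀ).mulVecLin).map G.vecMulLinear := by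
  ext x
  rw [mem_inf, mem_dualCode_span_range_row_iff, ← range_vecMulLinear, LinearMap.mem_range]
  constructor
  · rintro ⟨⟨v, rfl⟩, hv⟩
    exact ⟨v, by simpa [← mulVec_mulVec, mulVec_transpose] using hv, rfl⟩
  · rintro ⟨v, hv, rfl⟩
    exact ⟨⟨v, rfl⟩, by simpa [← mulVec_mulVec, mulVec_transpose] using hv⟩

theorem isLCD_span_range_row_iff_ker_eq_bot (G : Matrix ι (Fin n) R)
    (hG : LinearIndependent R G.row) :
    IsLCD (span R (Set.range G.row)) ↔ LinearMap.ker (G * Gᵀ).mulVecLin = ⊥ := by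
  rw [IsLCD, span_range_row_inf_dualCode_eq_map_ker, ← map_bot G.vecMulLinear]
  exact (map_injective_of_injective (vecMul_injective_iff.mpr hG)).eq_iff

theorem det_mul_transpose_ne_zero_iff_isLCD [IsDomain R] [DecidableEq ι]
    (G : Matrix ι (Fin n) R) (hG : LinearIndependent R G.row) :
    (G * Gᵀ).det ≠ 0 ↔ IsLCD (span R (Set.range G.row)) := by
  rw [isLCD_span_range_row_iff_ker_eq_bot G hG, ker_mulVecLin_eq_bot_iff, ne_eq,
    ← exists_mulVec_eq_zero_iff]
  simp only [ne_eq, not_exists, not_and, not_imp_not]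

end

theorem Matrix.linearIndependent_row_of_rank_eq_card {R : Type*} [Field R] {m n : Type*}
    [Fintype m] [Fintype n] {M : Matrix m n R} (h : M.rank = Fintype.card m) :
    LinearIndependent R M.row :=
  linearIndependent_iff_card_eq_finrank_span.mpr (h.symm.trans M.rank_eq_finrank_span_row)

/-- For a `k × n` matrix `G` over a field `F` of rank `k`, `det (G * Gᵀ) ≠ 0` iff the
code spanned by the rows of `G` is LCD. -/
theorem det_mul_transpose_ne_zero_iff_lcd {F : Type*} [Field F] {k n : ℕ}
    (G : Matrix (Fin k) (Fin n) F) (hrank : G.rank = k) :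
    (G * G.transpose).det ≠ 0 ↔ IsLCD (Submodule.span F (Set.range fun i => G i)) :=
  det_mul_transpose_ne_zero_iff_isLCD G
    (linearIndependent_row_of_rank_eq_card (hrank.trans (Fintype.card_fin k).symm))
end

section
/- Let F_q be a finite field. If there exists an MDS self-orthogonal [n,k] code over F_q (necessarily k ≤ n/2), then for every k' with 1 ≤ k' ≤ k there exists an MDS LCD [n−k, k'] code over F_q, i.e., a k'-dimensional LCD subspace of F_q^{n−k} with minimum distance (n−k) − k' + 1. -/
open Classical in
/-- The Hamming weight of a vector: the number of nonzero coordinates. -/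
noncomputable def wt {R : Type*} [Zero R] {n : ℕ} (x : Fin n → R) : ℕ :=
  (Finset.univ.filter fun i => x i ≠ 0).card

/-- `C` has minimum distance `d`: some nonzero codeword has weight `d`
and every nonzero codeword has weight at least `d`. -/
def hasMinDist {F : Type*} [Field F] {n : ℕ} (C : Submodule F (Fin n → F)) (d : ℕ) : Prop :=
  (∃ c ∈ C, c ≠ 0 ∧ wt c = d) ∧ ∀ c ∈ C, c ≠ 0 → d ≤ wt c

open scoped Classical

section helpers
variable {F : Type*} [Field F]

lemma wt_eq_sum {n : ℕ} (x : Fin n → F) :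
    wt x = ∑ i, if x i = 0 then 0 else 1 := by
  classical
  unfold wt
  rw [Finset.card_filter]
  exact Finset.sum_congr rfl fun i _ => by split_ifs <;> simp_all

lemma wt_le {n : ℕ} (x : Fin n → F) : wt x ≤ n := by
  rw [wt_eq_sum]
  calc ∑ i, (if x i = 0 then 0 else 1)
      ≤ ∑ _i : Fin n, 1 := Finset.sum_le_sum (fun i _ => by split_ifs <;> omega)
    _ = n := by simp

lemma wt_zero {n : ℕ} : wt (0 : Fin n → F) = 0 := by rw [wt_eq_sum]; simp

def splitEquiv (k m n : ℕ) (h : n = k + m) : Fin k ⊕ Fin m ≃ Fin n :=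
  finSumFinEquiv.trans (finCongr h.symm)

lemma splitEquiv_inl {k m n : ℕ} (h : n = k + m) (i : Fin k) :
    ((splitEquiv k m n h (.inl i)) : ℕ) = i := by
  simp [splitEquiv]

lemma splitEquiv_inr {k m n : ℕ} (h : n = k + m) (j : Fin m) :
    ((splitEquiv k m n h (.inr j)) : ℕ) = k + j := by
  simp [splitEquiv]

lemma sum_split {M : Type*} [AddCommMonoid M] {k m n : ℕ} (e : Fin k ⊕ Fin m ≃ Fin n)
    (f : Fin n → M) :
    ∑ i, f i = (∑ i, f (e (.inl i))) + ∑ j, f (e (.inr j)) := by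
  rw [← Equiv.sum_comp e f, Fintype.sum_sum_type]

lemma wt_split {k m n : ℕ} (e : Fin k ⊕ Fin m ≃ Fin n) (c : Fin n → F) :
    wt c = wt (fun i => c (e (.inl i))) + wt (fun j => c (e (.inr j))) := by
  rw [wt_eq_sum, wt_eq_sum, wt_eq_sum, sum_split e]

lemma dot_single {n : ℕ} (y : Fin n → F) (i0 : Fin n) :
    ∑ i, y i * (Pi.single i0 1 : Fin n → F) i = y i0 := by
  simp [Pi.single_apply, mul_ite, Finset.sum_ite_eq']

def extendZero (F : Type*) [Field F] {a b : ℕ} (hab : a ≤ b) :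
    (Fin a → F) →ₗ[F] (Fin b → F) where
  toFun y i := if h : (i : ℕ) < a then y ⟨i, h⟩ else 0
  map_add' y z := by funext i; by_cases h : (i:ℕ) < a <;> simp [h]
  map_smul' c y := by funext i; by_cases h : (i:ℕ) < a <;> simp [h]

lemma extendZero_castLE {a b : ℕ} (hab : a ≤ b) (y : Fin a → F) (i : Fin a) :
    extendZero F hab y (Fin.castLE hab i) = y i := by
  simp [extendZero]

lemma extendZero_of_ge {a b : ℕ} (hab : a ≤ b) (y : Fin a → F) (i : Fin b)
    (h : a ≤ (i:ℕ)) : extendZero F hab y i = 0 := by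
  simp only [extendZero, LinearMap.coe_mk, AddHom.coe_mk]
  rw [dif_neg (by omega)]

lemma extendZero_inj {a b : ℕ} (hab : a ≤ b) {y : Fin a → F}
    (h : extendZero F hab y = 0) : y = 0 := by
  funext i
  have := congrFun h (Fin.castLE hab i)
  rwa [extendZero_castLE] at this

lemma splitEquiv_inl_castLE {a b : ℕ} (hab : a ≤ b) (hb : b = a + (b - a)) (i : Fin a) :
    splitEquiv a (b - a) b hb (.inl i) = Fin.castLE hab i :=
  Fin.ext (by rw [splitEquiv_inl]; rfl)

lemma dot_extendZero {a b : ℕ} (hab : a ≤ b) (y z : Fin a → F) :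
    ∑ i, extendZero F hab y i * extendZero F hab z i = ∑ i, y i * z i := by
  have hb : b = a + (b - a) := by omega
  rw [sum_split (splitEquiv a (b - a) b hb)]
  have hz : (∑ j : Fin (b - a), extendZero F hab y (splitEquiv a (b-a) b hb (.inr j)) *
      extendZero F hab z (splitEquiv a (b-a) b hb (.inr j))) = 0 :=
    Finset.sum_eq_zero fun j _ => by
      rw [extendZero_of_ge hab y _ (by rw [splitEquiv_inr]; omega), zero_mul]
  rw [hz, add_zero]
  exact Finset.sum_congr rfl fun i _ => by
    rw [splitEquiv_inl_castLE hab, extendZero_castLE, extendZero_castLE]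

lemma wt_extendZero {a b : ℕ} (hab : a ≤ b) (y : Fin a → F) :
    wt (extendZero F hab y) = wt y := by
  have hb : b = a + (b - a) := by omega
  rw [wt_split (splitEquiv a (b - a) b hb)]
  have h1 : (fun i : Fin a => extendZero F hab y (splitEquiv a (b-a) b hb (.inl i))) = y := by
    funext i; rw [splitEquiv_inl_castLE hab, extendZero_castLE]
  have h2 : (fun j : Fin (b-a) => extendZero F hab y (splitEquiv a (b-a) b hb (.inr j)))
      = 0 := by
    funext j; exact extendZero_of_ge hab y _ (by rw [splitEquiv_inr]; omega)
  rw [h1, h2, wt_zero, add_zero]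

lemma wt_le_of_vanish {m r : ℕ} (hrm : r ≤ m) (x : Fin m → F)
    (h : ∀ j : Fin m, (j:ℕ) < r → x j = 0) : wt x ≤ m - r := by
  classical
  have : wt x = (Finset.univ.filter fun j => x j ≠ 0).card := by
    unfold wt; congr 1
  rw [this]
  have hsub : (Finset.univ.filter fun j : Fin m => x j ≠ 0)
      ⊆ Finset.univ.filter fun j : Fin m => ¬ (j:ℕ) < r := by
    intro j hj
    simp only [Finset.mem_filter, Finset.mem_univ, true_and] at *
    intro hlt
    exact hj (h j hlt)
  refine (Finset.card_le_card hsub).trans ?_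
  have hcard : (Finset.univ.filter fun j : Fin m => (j:ℕ) < r)
      = Finset.univ.map (Fin.castLEEmb hrm) := by
    ext j
    simp only [Finset.mem_filter, Finset.mem_univ, true_and, Finset.mem_map,
      Fin.castLEEmb_apply]
    constructor
    · intro hlt; exact ⟨⟨j, hlt⟩, Fin.ext rfl⟩
    · rintro ⟨i, rfl⟩; exact i.isLt
  rw [Finset.filter_not, Finset.card_sdiff_of_subset (Finset.filter_subset _ _), hcard]
  simp

end helpers

/-- If there exists an MDS self-orthogonal `[n, k]` code over the finite field `F`,
then for every `1 ≤ k' ≤ k` there exists an MDS LCD `[n - k, k']` code over `F`. -/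
theorem mds_lcd_of_mds_self_orthogonal {F : Type*} [Field F] [Fintype F] {n k : ℕ}
    (hC : ∃ C : Submodule F (Fin n → F),
      Module.finrank F C = k ∧ C ≤ dualCode C ∧ hasMinDist C (n - k + 1)) :
    ∀ k', 1 ≤ k' → k' ≤ k →
      ∃ C' : Submodule F (Fin (n - k) → F),
        Module.finrank F C' = k' ∧ IsLCD C' ∧ hasMinDist C' ((n - k) - k' + 1) := by
  classical
  obtain ⟨C, hrank, hso, hmin⟩ := hC
  intro k' hk'1 hk'k
  set m := n - k with hm
  have hkn : k ≤ n := by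
    have h := Submodule.finrank_le C
    rwa [hrank, Module.finrank_fin_fun] at h
  have hnkm : n = k + m := by omega
  set e : Fin k ⊕ Fin m ≃ Fin n := splitEquiv k m n hnkm with he
  -- projection to first k coordinates, restricted to C
  set π1 : (Fin n → F) →ₗ[F] (Fin k → F) := LinearMap.funLeft F F (fun i => e (.inl i))
    with hπ1
  set φ0 : C →ₗ[F] (Fin k → F) := π1.comp C.subtype with hφ0
  have hφ0_apply : ∀ (c : C) (i : Fin k), φ0 c i = (c : Fin n → F) (e (.inl i)) :=
    fun c i => rfl
  have hinj1 : Function.Injective φ0 := by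
    rw [injective_iff_map_eq_zero]
    intro c hc0
    by_contra hne
    have hcne : (c : Fin n → F) ≠ 0 := fun h => hne (Subtype.ext h)
    have h1 := hmin.2 c c.2 hcne
    have hsplit := wt_split e (c : Fin n → F)
    have hz : wt (fun i => (c : Fin n → F) (e (.inl i))) = 0 := by
      have : (fun i => (c : Fin n → F) (e (.inl i))) = 0 := by
        funext i; exact congrFun hc0 i
      rw [this, wt_zero]
    have h2 : wt (fun j => (c : Fin n → F) (e (.inr j))) ≤ m := wt_le _
    omega
  have hsurj1 : Function.Surjective φ0 := by
    have hfr : Module.finrank F C = Module.finrank F (Fin k → F) := by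
      rw [hrank, Module.finrank_fin_fun]
    exact (LinearMap.injective_iff_surjective_of_finrank_eq_finrank hfr).mp hinj1
  set eqv : C ≃ₗ[F] (Fin k → F) := LinearEquiv.ofBijective φ0 ⟨hinj1, hsurj1⟩ with heqv
  set G : (Fin k → F) →ₗ[F] (Fin n → F) :=
    C.subtype.comp (eqv.symm : (Fin k → F) →ₗ[F] C) with hG
  have hGmem : ∀ y, G y ∈ C := fun y => (eqv.symm y).2
  have hG1 : ∀ (y : Fin k → F) (i : Fin k), G y (e (.inl i)) = y i := by
    intro y i
    have h := eqv.apply_symm_apply y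
    have := congrFun (congrArg (fun (v : Fin k → F) => v) h) i
    exact this
  have hGinj : Function.Injective G := by
    intro a b hab
    exact eqv.symm.injective (Subtype.ext hab)
  set B : (Fin k → F) →ₗ[F] (Fin m → F) :=
    (LinearMap.funLeft F F (fun j => e (.inr j))).comp G with hB
  have hB_apply : ∀ y j, B y j = G y (e (.inr j)) := fun y j => rfl
  -- key orthogonality identity
  have key : ∀ y z : Fin k → F, (∑ i, y i * z i) + ∑ j, B y j * B z j = 0 := by
    intro y z
    have h : ∀ c ∈ C, ∑ i, G y i * c i = 0 := hso (hGmem y)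
    have h2 := h (G z) (hGmem z)
    rw [sum_split e] at h2
    have h3 : (∑ i, G y (e (.inl i)) * G z (e (.inl i))) = ∑ i, y i * z i :=
      Finset.sum_congr rfl fun i _ => by rw [hG1, hG1]
    rw [h3] at h2
    exact h2
  -- nondegeneracy consequence
  have nondeg : ∀ y : Fin k → F, B y = 0 → y = 0 := by
    intro y hy
    funext i0
    have h := key y (Pi.single i0 1)
    rw [hy] at h
    simp only [LinearMap.map_zero, Pi.zero_apply, zero_mul, Finset.sum_const_zero,
      add_zero] at h
    rw [dot_single] at h
    exact h
  have hBinj : Function.Injective B := by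
    rw [injective_iff_map_eq_zero]
    exact fun y hy => nondeg y hy
  have hkm : k ≤ m := by
    have h := LinearMap.finrank_le_finrank_of_injective hBinj
    rwa [Module.finrank_fin_fun, Module.finrank_fin_fun] at h
  have hk'm : k' ≤ m := le_trans hk'k hkm
  -- the LCD code
  set G' : (Fin k' → F) →ₗ[F] (Fin m → F) := B.comp (extendZero F hk'k) with hG'
  set C' : Submodule F (Fin m → F) := LinearMap.range G' with hC'
  have key' : ∀ y z : Fin k' → F,
      ∑ j, G' y j * G' z j = -∑ i, y i * z i := by
    intro y z
    have h := key (extendZero F hk'k y) (extendZero F hk'k z)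
    rw [dot_extendZero] at h
    have : (∑ j, B (extendZero F hk'k y) j * B (extendZero F hk'k z) j)
        = ∑ j, G' y j * G' z j := rfl
    rw [this] at h
    exact eq_neg_of_add_eq_zero_right h
  have hG'zero : ∀ y : Fin k' → F, G' y = 0 → y = 0 := by
    intro y hy
    funext i0
    have h := key' y (Pi.single i0 1)
    rw [hy] at h
    simp only [Pi.zero_apply, zero_mul, Finset.sum_const_zero] at h
    rw [dot_single] at h
    exact neg_eq_zero.mp h.symm
  have hG'inj : Function.Injective G' := by
    rw [injective_iff_map_eq_zero]
    exact fun y hy => hG'zero y hy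
  -- lower bound on weights of nonzero codewords of C'
  have hlow : ∀ y : Fin k' → F, y ≠ 0 → m - k' + 1 ≤ wt (G' y) := by
    intro y hy
    have hext : extendZero F hk'k y ≠ 0 := fun h => hy (extendZero_inj hk'k h)
    have hcne : G (extendZero F hk'k y) ≠ 0 := by
      intro h
      exact hext (hGinj (h.trans (map_zero G).symm))
    have h1 := hmin.2 _ (hGmem _) hcne
    have hsplit := wt_split e (G (extendZero F hk'k y))
    have hA : (fun i => G (extendZero F hk'k y) (e (.inl i))) = extendZero F hk'k y :=
      funext fun i => hG1 _ i
    have hBz : (fun j => G (extendZero F hk'k y) (e (.inr j))) = G' y :=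
      funext fun j => rfl
    rw [hA, hBz, wt_extendZero] at hsplit
    have h2 : wt y ≤ k' := wt_le y
    omega
  refine ⟨C', ?_, ?_, ?_, ?_⟩
  · rw [hC', LinearMap.finrank_range_of_inj hG'inj, Module.finrank_fin_fun]
  · -- LCD
    rw [IsLCD, Submodule.eq_bot_iff]
    rintro x hx
    rw [Submodule.mem_inf] at hx
    obtain ⟨⟨y, rfl⟩, hx2⟩ := hx
    have hy : y = 0 := by
      funext i0
      have h : ∀ c ∈ C', ∑ j, G' y j * c j = 0 := hx2
      have h2 := h (G' (Pi.single i0 1)) ⟨Pi.single i0 1, rfl⟩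
      rw [key' y (Pi.single i0 1), dot_single] at h2
      exact neg_eq_zero.mp h2
    rw [hy, map_zero]
  · -- existence of a codeword of weight exactly m - k' + 1
    have hrm : k' - 1 ≤ m := by omega
    set ψ : (Fin k' → F) →ₗ[F] (Fin (k'-1) → F) :=
      (LinearMap.funLeft F F (Fin.castLE hrm)).comp G' with hψ
    have hker : LinearMap.ker ψ ≠ ⊥ := by
      intro h
      have hinj : Function.Injective ψ := LinearMap.ker_eq_bot.mp h
      have hle := LinearMap.finrank_le_finrank_of_injective hinj
      rw [Module.finrank_fin_fun, Module.finrank_fin_fun] at hle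
      omega
    obtain ⟨y, hyker, hy0⟩ := Submodule.exists_mem_ne_zero_of_ne_bot hker
    have hvan : ∀ j : Fin m, (j:ℕ) < k' - 1 → G' y j = 0 := by
      intro j hj
      have h := LinearMap.mem_ker.mp hyker
      have h2 := congrFun h ⟨(j:ℕ), hj⟩
      have h3 : Fin.castLE hrm (⟨(j:ℕ), hj⟩ : Fin (k'-1)) = j := Fin.ext rfl
      rwa [show (ψ y) ⟨(j:ℕ), hj⟩ = G' y (Fin.castLE hrm ⟨(j:ℕ), hj⟩) from rfl, h3] at h2
    have hle2 := wt_le_of_vanish hrm (G' y) hvan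
    have hge := hlow y hy0
    have hne : G' y ≠ 0 := fun h => hy0 (hG'zero y h)
    exact ⟨G' y, ⟨y, rfl⟩, hne, by omega⟩
  · intro c hc hcne
    obtain ⟨y, rfl⟩ := hc
    refine hlow y ?_
    intro h0
    apply hcne
    rw [h0, map_zero]
end

section
/- For any even prime power q = 2^m, and for all integers n, k with 1 ≤ n ≤ 2^{m−1} and 1 ≤ k ≤ n, there exists an MDS LCD [n,k] code over F_q, i.e., a k-dimensional LCD subspace of F_q^n with minimum distance n − k + 1. -/
/-!
Take a generalized Reed–Solomon code: codewords `(v i * p (α i))ᵢ` for polynomials `p` of degree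
`< k`, with distinct points `α i` and nonzero multipliers `v i`. It is MDS because a nonzero such
`p` has fewer than `k` roots. With generator matrix `G` it is LCD as soon as `G Gᵀ` is invertible,
and `G Gᵀ = ∑ᵢ v i ^ 2 • xᵢ xᵢᵀ` with `xᵢ = (1, α i, …, α i ^ (k - 1))`. Weights `w i` making this
moment matrix invertible are found by starting from the indicator of `k` points, where it is a
Vandermonde Gram matrix, and switching the other weights on one at a time: by the matrix
determinant lemma the determinant is affine in the new weight, so when `q ≥ 3` some nonzero value
keeps it nonzero. In characteristic two every weight `w i` is a square `v i ^ 2`.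
-/

open Finset Matrix Polynomial

theorem isLCD_range_vecMulLinear {R : Type*} [CommRing R] [NoZeroDivisors R] {k n : ℕ}
    {G : Matrix (Fin k) (Fin n) R} (hG : (G * Gᵀ).det ≠ 0) :
    IsLCD (LinearMap.range G.vecMulLinear) := by
  rw [IsLCD, eq_bot_iff]
  rintro _ ⟨⟨c, rfl⟩, hdual⟩
  have hGc : (G * Gᵀ) *ᵥ c = 0 := by
    ext a
    rw [← mulVec_mulVec, mulVec_transpose, mulVec, dotProduct_comm]
    exact hdual (G a) ⟨Pi.single a 1, single_one_vecMul a G⟩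
  simp [eq_zero_of_mulVec_eq_zero hG hGc]

theorem transpose_mul_diagonal_mul_eq_sum {R ι : Type*} [CommSemiring R] {n : ℕ}
    (V : Matrix (Fin n) ι R) (w : Fin n → R) :
    Vᵀ * diagonal w * V = ∑ i, w i • vecMulVec (V i) (V i) := by
  rw [Matrix.mul_assoc]
  ext a b
  simp only [mul_apply, diagonal_apply, ite_mul, zero_mul, Finset.sum_ite_eq, mem_univ, if_true,
    transpose_apply, Matrix.sum_apply, Matrix.smul_apply, vecMulVec_apply, smul_eq_mul]
  exact Finset.sum_congr rfl fun i _ => by ring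

theorem det_add_smul_vecMulVec {F ι : Type*} [Field F] [Fintype ι] [DecidableEq ι]
    {A : Matrix ι ι F} (hA : A.det ≠ 0) (u v : ι → F) (t : F) :
    (A + t • vecMulVec u v).det = A.det * (1 + t * (v ⬝ᵥ A⁻¹ *ᵥ u)) := by
  rw [← smul_vecMulVec, vecMulVec_eq Unit, det_add_replicateCol_mul_replicateRow hA.isUnit,
    Matrix.mul_assoc, ← replicateCol_mulVec]
  simp [mulVec_smul]

theorem exists_ne_zero_det_add_smul_vecMulVec {F ι : Type*} [Field F] [Fintype F]
    [Fintype ι] [DecidableEq ι] (hF : 3 ≤ Fintype.card F) {A : Matrix ι ι F} (hA : A.det ≠ 0)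
    (u v : ι → F) : ∃ t : F, t ≠ 0 ∧ (A + t • vecMulVec u v).det ≠ 0 := by
  classical
  set c := v ⬝ᵥ A⁻¹ *ᵥ u with hc_def
  obtain ⟨t, -, ht⟩ := Finset.exists_mem_notMem_of_card_lt_card
    (s := {0, -c⁻¹}) (t := univ) ((card_le_two).trans_lt (by rwa [card_univ]))
  simp only [mem_insert, mem_singleton, not_or] at ht
  refine ⟨t, ht.1, ?_⟩
  rw [det_add_smul_vecMulVec hA, ← hc_def]
  refine mul_ne_zero hA fun h => ht.2 ?_
  have hc : c ≠ 0 := by rintro hc; rw [hc, mul_zero, add_zero] at h; exact one_ne_zero h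
  field_simp
  linear_combination h

theorem exists_forall_ne_zero_of_update {ι M : Type*} [Fintype ι] [DecidableEq ι] [Zero M]
    {P : (ι → M) → Prop}
    (hstep : ∀ w i, P w → w i = 0 → ∃ t, t ≠ 0 ∧ P (Function.update w i t))
    {w₀ : ι → M} (h₀ : P w₀) : ∃ w, P w ∧ ∀ i, w i ≠ 0 := by
  suffices H : ∀ s : Finset ι, ∀ w, P w → (∀ i ∉ s, w i ≠ 0) → ∃ w, P w ∧ ∀ i, w i ≠ 0 from
    H univ w₀ h₀ (by simp)
  intro s
  induction s using Finset.induction_on with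
  | empty => exact fun w hw hne => ⟨w, hw, fun i => hne i (notMem_empty i)⟩
  | insert j s _ ih =>
    intro w hw hne
    obtain ⟨w', hw', hj, hw'w⟩ : ∃ w', P w' ∧ w' j ≠ 0 ∧ ∀ i ≠ j, w' i = w i := by
      by_cases hwj : w j = 0
      · obtain ⟨t, ht, hPt⟩ := hstep w j hw hwj
        exact ⟨_, hPt, by simpa using ht, fun i hi => Function.update_of_ne hi _ _⟩
      · exact ⟨w, hw, hwj, fun _ _ => rfl⟩
    refine ih w' hw' fun i hi => ?_
    by_cases hij : i = j
    · exact hij ▸ hj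
    · rw [hw'w i hij]
      exact hne i (by simp [hij, hi])

section ReedSolomon

variable {F : Type*} [Field F] {n k : ℕ}

def powerMatrix (k : ℕ) (α : Fin n → F) : Matrix (Fin n) (Fin k) F :=
  of fun i a => α i ^ (a : ℕ)

def momentMatrix (k : ℕ) (α w : Fin n → F) : Matrix (Fin k) (Fin k) F :=
  (powerMatrix k α)ᵀ * diagonal w * powerMatrix k α

theorem momentMatrix_update_of_eq_zero (α : Fin n → F) {w : Fin n → F} {i : Fin n}
    (hi : w i = 0) (t : F) :
    momentMatrix k α (Function.update w i t) =
      momentMatrix k α w + t • vecMulVec (powerMatrix k α i) (powerMatrix k α i) := by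
  have hw : Function.update w i t = w + Pi.single i t := by
    ext j
    rcases eq_or_ne j i with rfl | hj <;> simp [*]
  simp only [momentMatrix, transpose_mul_diagonal_mul_eq_sum, hw, Pi.add_apply, add_smul,
    sum_add_distrib]
  simp [Pi.single_apply, ite_smul]

theorem det_momentMatrix_indicator_ne_zero {α : Fin n → F} (hα : Function.Injective α)
    (e : Fin k ↪ Fin n) :
    (momentMatrix k α fun i => if i ∈ univ.map e then 1 else 0).det ≠ 0 := by
  have h : (momentMatrix k α fun i => if i ∈ univ.map e then 1 else 0) =
      (vandermonde (α ∘ e))ᵀ * vandermonde (α ∘ e) := by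
    rw [momentMatrix, transpose_mul_diagonal_mul_eq_sum, ← Matrix.mul_one (vandermonde _)ᵀ,
      ← diagonal_one, transpose_mul_diagonal_mul_eq_sum]
    simp only [ite_smul, one_smul, zero_smul, Finset.sum_ite_mem, univ_inter, sum_map]
    rfl
  rw [h, det_mul, det_transpose]
  exact mul_self_ne_zero.mpr (det_vandermonde_ne_zero_iff.mpr (hα.comp e.injective))

theorem exists_det_momentMatrix_ne_zero [Fintype F] {α : Fin n → F}
    (hα : Function.Injective α) (hk : k ≤ n) (hF : k < n → 3 ≤ Fintype.card F) :
    ∃ w : Fin n → F, (momentMatrix k α w).det ≠ 0 ∧ ∀ i, w i ≠ 0 := by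
  rcases hk.eq_or_lt with rfl | hlt
  · refine ⟨_, det_momentMatrix_indicator_ne_zero hα (Function.Embedding.refl _), fun i => ?_⟩
    simp
  · refine exists_forall_ne_zero_of_update (fun w i hw hwi => ?_)
      (det_momentMatrix_indicator_ne_zero hα (Fin.castLEEmb hk))
    simp only [momentMatrix_update_of_eq_zero α hwi]
    exact exists_ne_zero_det_add_smul_vecMulVec (hF hlt) hw _ _

def grsMatrix (k : ℕ) (α v : Fin n → F) : Matrix (Fin k) (Fin n) F :=
  (powerMatrix k α)ᵀ * diagonal v

def grsCode (k : ℕ) (α v : Fin n → F) : Submodule F (Fin n → F) :=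
  LinearMap.range (grsMatrix k α v).vecMulLinear

theorem grsMatrix_mul_transpose (α v : Fin n → F) :
    grsMatrix k α v * (grsMatrix k α v)ᵀ = momentMatrix k α fun i => v i * v i := by
  rw [grsMatrix, momentMatrix, transpose_mul, diagonal_transpose, transpose_transpose,
    Matrix.mul_assoc, ← Matrix.mul_assoc (diagonal v), diagonal_mul_diagonal, Matrix.mul_assoc]

theorem isLCD_grsCode {α v : Fin n → F} (h : (momentMatrix k α fun i => v i * v i).det ≠ 0) :
    IsLCD (grsCode k α v) :=
  isLCD_range_vecMulLinear (grsMatrix_mul_transpose α v ▸ h)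

theorem vecMul_grsMatrix (α v : Fin n → F) (p : degreeLT F k) :
    degreeLTEquiv F k p ᵥ* grsMatrix k α v = fun i => v i * (p : F[X]).eval (α i) := by
  ext i
  rw [grsMatrix, ← vecMul_vecMul, vecMul_diagonal, vecMul_transpose,
    eval_eq_sum_degreeLTEquiv p.2]
  simp [mulVec, dotProduct, powerMatrix, mul_comm]

theorem mem_grsCode {α v x : Fin n → F} :
    x ∈ grsCode k α v ↔ ∃ p ∈ degreeLT F k, (fun i => v i * p.eval (α i)) = x := by
  simp only [grsCode, LinearMap.mem_range, vecMulLinear_apply]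
  constructor
  · rintro ⟨c, rfl⟩
    obtain ⟨p, rfl⟩ := (degreeLTEquiv F k).surjective c
    exact ⟨p, p.2, (vecMul_grsMatrix α v p).symm⟩
  · rintro ⟨p, hp, rfl⟩
    exact ⟨_, vecMul_grsMatrix α v ⟨p, hp⟩⟩

theorem card_filter_eval_eq_zero_lt [DecidableEq F] {α : Fin n → F} (hα : Function.Injective α)
    {p : F[X]} (hp : p ∈ degreeLT F k) (hp0 : p ≠ 0) : #{i | p.eval (α i) = 0} < k := by
  refine lt_of_le_of_lt ?_ ((natDegree_lt_iff_degree_lt hp0).mpr (mem_degreeLT.mp hp))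
  by_contra! h
  refine hp0 (eq_zero_of_natDegree_lt_card_of_eval_eq_zero p (hα.comp Subtype.val_injective)
    (fun i : ({i | p.eval (α i) = 0} : Finset (Fin n)) => (mem_filter.mp i.2).2)
    (h.trans_eq (Fintype.card_coe _).symm))

theorem finrank_grsCode {α v : Fin n → F} (hα : Function.Injective α) (hv : ∀ i, v i ≠ 0)
    (hk : k ≤ n) : Module.finrank F (grsCode k α v) = k := by
  classical
  suffices Function.Injective (grsMatrix k α v).vecMulLinear by
    rw [grsCode, LinearMap.finrank_range_of_inj this, Module.finrank_fin_fun]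
  rw [← LinearMap.ker_eq_bot, LinearMap.ker_eq_bot']
  intro c hc
  obtain ⟨p, rfl⟩ := (degreeLTEquiv F k).surjective c
  rw [vecMulLinear_apply, vecMul_grsMatrix] at hc
  have hroot : ∀ i, (p : F[X]).eval (α i) = 0 := fun i =>
    (mul_eq_zero.mp (congrFun hc i)).resolve_left (hv i)
  have hp : (p : F[X]) = 0 := by
    by_contra hp0
    have := card_filter_eval_eq_zero_lt hα p.2 hp0
    simp [hroot] at this
    omega
  simp [Subtype.ext_iff, hp]

theorem wt_mul_eval [DecidableEq F] {v : Fin n → F} (hv : ∀ i, v i ≠ 0) (α : Fin n → F)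
    (p : F[X]) : wt (fun i => v i * p.eval (α i)) = n - #{i | p.eval (α i) = 0} := by
  have := card_filter_add_card_filter_not (s := univ) fun i => p.eval (α i) = 0
  simp only [wt, ne_eq, mul_eq_zero, hv, false_or, card_univ, Fintype.card_fin] at this ⊢
  convert (Nat.eq_sub_of_add_eq' this)

theorem exists_mem_grsCode_wt_eq {α v : Fin n → F} (hα : Function.Injective α)
    (hv : ∀ i, v i ≠ 0) (hk1 : 1 ≤ k) (hk : k ≤ n) :
    ∃ x ∈ grsCode k α v, x ≠ 0 ∧ wt x = n - k + 1 := by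
  classical
  obtain ⟨S, -, hS⟩ := exists_subset_card_eq (s := (univ : Finset (Fin n))) (n := k - 1)
    (by rw [card_univ, Fintype.card_fin]; omega)
  set p : F[X] := ∏ j ∈ S, (X - C (α j))
  have hp : p ∈ degreeLT F k := by
    rw [mem_degreeLT, degree_eq_natDegree (monic_prod_of_monic _ _
      fun j _ => monic_X_sub_C (α j)).ne_zero, natDegree_finsetProd_X_sub_C_eq_card]
    exact_mod_cast (by omega : #S < k)
  have hroots : ({i | p.eval (α i) = 0} : Finset (Fin n)) = S := by
    ext i
    simp [p, eval_prod, prod_eq_zero_iff, sub_eq_zero, hα.eq_iff]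
  have hwt : wt (fun i => v i * p.eval (α i)) = n - k + 1 := by
    rw [wt_mul_eval hv, hroots, hS]
    omega
  refine ⟨_, mem_grsCode.mpr ⟨p, hp, rfl⟩, fun h0 => ?_, hwt⟩
  rw [h0] at hwt
  simp [wt] at hwt

theorem le_wt_of_mem_grsCode {α v x : Fin n → F} (hα : Function.Injective α)
    (hv : ∀ i, v i ≠ 0) (hk : k ≤ n) (hx : x ∈ grsCode k α v) (hx0 : x ≠ 0) :
    n - k + 1 ≤ wt x := by
  classical
  obtain ⟨p, hp, rfl⟩ := mem_grsCode.mp hx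
  have hp0 : p ≠ 0 := by
    rintro rfl
    exact hx0 (funext fun i => by simp)
  have := card_filter_eval_eq_zero_lt hα hp hp0
  rw [wt_mul_eval hv]
  omega

theorem hasMinDist_grsCode {α v : Fin n → F} (hα : Function.Injective α) (hv : ∀ i, v i ≠ 0)
    (hk1 : 1 ≤ k) (hk : k ≤ n) : hasMinDist (grsCode k α v) (n - k + 1) :=
  ⟨exists_mem_grsCode_wt_eq hα hv hk1 hk, fun _ hx hx0 => le_wt_of_mem_grsCode hα hv hk hx hx0⟩

end ReedSolomon

theorem exists_mds_lcd_char_two_general {F : Type*} [Field F] [Fintype F] {m n k : ℕ}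
    (hq : Fintype.card F = 2 ^ m)
    (hn2 : n ≤ 2 ^ (m - 1)) (hk1 : 1 ≤ k) (hk2 : k ≤ n) :
    ∃ C : Submodule F (Fin n → F),
      Module.finrank F C = k ∧ IsLCD C ∧ hasMinDist C (n - k + 1) := by
  classical
  have hm : m ≠ 0 := by
    rintro rfl
    exact (Fintype.one_lt_card (α := F)).ne' hq
  have hq' : Fintype.card F = 2 * 2 ^ (m - 1) := by
    rw [hq, ← pow_succ', Nat.sub_add_cancel (Nat.one_le_iff_ne_zero.mpr hm)]
  have hchar : ringChar F = 2 := FiniteField.even_card_iff_char_two.mpr (by omega)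
  obtain ⟨α⟩ : Nonempty (Fin n ↪ F) :=
    Function.Embedding.nonempty_of_card_le (by rw [Fintype.card_fin]; omega)
  obtain ⟨w, hdet, hw⟩ := exists_det_momentMatrix_ne_zero α.injective hk2 (fun _ => by omega)
  choose v hv using fun i => FiniteField.isSquare_of_char_two hchar (w i)
  have hvw : (fun i => v i * v i) = w := funext fun i => (hv i).symm
  have hv0 : ∀ i, v i ≠ 0 := fun i h => hw i (by simp [hv i, h])
  exact ⟨grsCode k α v, finrank_grsCode α.injective hv0 hk2, isLCD_grsCode (hvw ▸ hdet),
    hasMinDist_grsCode α.injective hv0 hk1 hk2⟩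

/-- For any even prime power `q = 2^m` and all `1 ≤ n ≤ 2^(m-1)`, `1 ≤ k ≤ n`,
there exists an MDS LCD `[n, k]` code over `F_q`. -/
theorem exists_mds_lcd_char_two {F : Type*} [Field F] [Fintype F] {m n k : ℕ}
    (hq : Fintype.card F = 2 ^ m)
    (hn1 : 1 ≤ n) (hn2 : n ≤ 2 ^ (m - 1)) (hk1 : 1 ≤ k) (hk2 : k ≤ n) :
    ∃ C : Submodule F (Fin n → F),
      Module.finrank F C = k ∧ IsLCD C ∧ hasMinDist C (n - k + 1) :=
  exists_mds_lcd_char_two_general hq hn2 hk1 hk2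
end

section
/- For any odd prime power q with q ≡ 1 (mod 4) and q ≥ 2^{2n} · (2n)^2, and for every k with 1 ≤ k ≤ n, there exists an MDS LCD [n,k] code over F_q. -/
open MvPolynomial in
lemma my_sz {F : Type*} [Field F] [Fintype F] :
    ∀ (m : ℕ) (p : MvPolynomial (Fin m) F), p ≠ 0 →
      p.totalDegree < Fintype.card F → ∃ x : Fin m → F, eval x p ≠ 0 := by
  intro m
  induction m with
  | zero =>
    intro p hp _
    obtain ⟨c, rfl⟩ := C_surjective (Fin 0) p
    refine ⟨finZeroElim, ?_⟩
    rw [eval_C]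
    exact fun h => hp (by rw [h, map_zero])
  | succ m ih =>
    intro p hp hdeg
    set q := finSuccEquiv F m p with hq
    have hq0 : q ≠ 0 := by
      intro h
      apply hp
      exact (finSuccEquiv F m).injective (by rw [← hq, h, map_zero])
    have hlc : q.coeff q.natDegree ≠ 0 := by
      rw [Polynomial.coeff_natDegree]
      exact Polynomial.leadingCoeff_ne_zero.mpr hq0
    have hdlc : (q.coeff q.natDegree).totalDegree < Fintype.card F := by
      have h1 := totalDegree_coeff_finSuccEquiv_add_le p q.natDegree hlc
      rw [← hq] at h1
      omega
    obtain ⟨x, hx⟩ := ih _ hlc hdlc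
    set r := q.map (eval x) with hr
    have hr0 : r ≠ 0 := by
      intro h
      apply hx
      have h2 : r.coeff q.natDegree = eval x (q.coeff q.natDegree) := Polynomial.coeff_map _ _
      rw [h] at h2
      simpa using h2.symm
    have hrd : r.natDegree < Fintype.card F := by
      have h1 : r.natDegree ≤ q.natDegree := Polynomial.natDegree_map_le
      have h2 : q.natDegree ≤ p.totalDegree := by
        rw [hq, natDegree_finSuccEquiv]
        exact degreeOf_le_totalDegree p 0
      omega
    obtain ⟨y, hy⟩ := Polynomial.exists_eval_ne_zero_of_natDegree_lt_card r hr0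
      (by rw [Cardinal.mk_fintype]; exact_mod_cast hrd)
    exact ⟨Fin.cons y x, by rwa [eval_eq_eval_mv_eval']⟩

lemma my_totalDegree_det_le {F : Type*} [CommRing F] {k n : ℕ} {d : ℕ}
    (M : Matrix (Fin k) (Fin k) (MvPolynomial (Fin n) F))
    (h : ∀ j l, (M j l).totalDegree ≤ d) : M.det.totalDegree ≤ k * d := by
  rw [Matrix.det_apply]
  refine le_trans (MvPolynomial.totalDegree_finset_sum _ _) ?_
  apply Finset.sup_le
  intro σ _
  have h1 : (Equiv.Perm.sign σ • ∏ i, M (σ i) i).totalDegree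
      ≤ (∏ i, M (σ i) i).totalDegree := by
    rcases Int.units_eq_one_or (Equiv.Perm.sign σ) with h1 | h1 <;>
      simp [h1, Units.smul_def]
  refine le_trans h1 (le_trans (MvPolynomial.totalDegree_finset_prod _ _) ?_)
  calc ∑ i, (M (σ i) i).totalDegree ≤ ∑ _i : Fin k, d :=
        Finset.sum_le_sum (fun i _ => h _ _)
    _ = k * d := by simp [mul_comm]

lemma my_filter_lt_eq_map {n m : ℕ} (h : m ≤ n) :
    (Finset.univ : Finset (Fin n)).filter (fun i : Fin n => (i : ℕ) < m) =
      Finset.univ.map (Fin.castLEEmb h) := by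
  ext i
  simp only [Finset.mem_filter, Finset.mem_univ, true_and, Finset.mem_map,
    Function.Embedding.coeFn_mk]
  constructor
  · intro hi
    exact ⟨⟨i, hi⟩, by simp [Fin.castLEEmb, Fin.ext_iff, Fin.castLE]⟩
  · rintro ⟨j, rfl⟩
    simpa using j.2

lemma my_mulVec_eq_zero {F : Type*} [Field F] {k : ℕ}
    {M : Matrix (Fin k) (Fin k) F} (h : M.det ≠ 0) {y : Fin k → F}
    (hy : M.mulVec y = 0) : y = 0 := by
  have hinv := Matrix.nonsing_inv_mul M (isUnit_iff_ne_zero.mpr h)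
  calc y = (M⁻¹ * M).mulVec y := by rw [hinv, Matrix.one_mulVec]
    _ = M⁻¹.mulVec (M.mulVec y) := (Matrix.mulVec_mulVec _ _ _).symm
    _ = 0 := by rw [hy, Matrix.mulVec_zero]

open Matrix in
/-- For any odd prime power `q` with `q ≡ 1 (mod 4)` and `q ≥ 2^(2n) * (2n)^2`,
and every `1 ≤ k ≤ n`, there exists an MDS LCD `[n, k]` code over `F_q`. -/
theorem exists_mds_lcd_one_mod_four {F : Type*} [Field F] [Fintype F] {n k : ℕ}
    (hodd : Odd (Fintype.card F))
    (hmod : Fintype.card F % 4 = 1)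
    (hbig : 2 ^ (2 * n) * (2 * n) ^ 2 ≤ Fintype.card F)
    (hk1 : 1 ≤ k) (hk2 : k ≤ n) :
    ∃ C : Submodule F (Fin n → F),
      Module.finrank F C = k ∧ IsLCD C ∧ hasMinDist C (n - k + 1) := by
  classical
  have hn1 : 1 ≤ n := hk1.trans hk2
  have hq : 3 * n + 1 ≤ Fintype.card F := by
    have h1 : 1 ≤ 2 ^ (2 * n) := Nat.one_le_two_pow
    nlinarith
  obtain ⟨a⟩ : Nonempty (Fin n ↪ F) := by
    apply Function.Embedding.nonempty_of_card_le
    simp only [Fintype.card_fin]; omega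
  -- the Vandermonde matrix on the first k points
  set a' : Fin k → F := fun j => a (Fin.castLE hk2 j) with ha'
  have hVdet : (Matrix.vandermonde a').det ≠ 0 := by
    rw [Matrix.det_vandermonde]
    refine Finset.prod_ne_zero_iff.mpr fun i _ => Finset.prod_ne_zero_iff.mpr fun j hj => ?_
    refine sub_ne_zero.mpr fun h => ?_
    have hij : j = i := Fin.castLE_injective hk2 (a.injective h)
    exact absurd (Finset.mem_Ioi.mp hj) (by omega)
  -- the generic Gram matrix as a matrix of multivariate polynomials
  set E : Matrix (Fin k) (Fin k) (MvPolynomial (Fin n) F) :=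
    Matrix.of fun j l => ∑ i : Fin n,
      (MvPolynomial.X i * MvPolynomial.C (a i ^ (j : ℕ))) *
      (MvPolynomial.X i * MvPolynomial.C (a i ^ (l : ℕ))) with hE
  have hEapp : ∀ j l : Fin k, E j l = ∑ i : Fin n,
      (MvPolynomial.X i * MvPolynomial.C (a i ^ (j : ℕ))) *
      (MvPolynomial.X i * MvPolynomial.C (a i ^ (l : ℕ))) := fun j l => rfl
  have hEeval : ∀ (w : Fin n → F) (j l : Fin k),
      MvPolynomial.eval w (E j l)
        = ∑ i : Fin n, (w i * a i ^ (j : ℕ)) * (w i * a i ^ (l : ℕ)) := by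
    intro w j l
    rw [hEapp]
    simp [map_sum]
  have hsum : ∀ g : Fin n → F,
      ∑ i ∈ Finset.univ.filter (fun i : Fin n => (i : ℕ) < k), g i
        = ∑ i : Fin k, g (Fin.castLE hk2 i) := by
    intro g
    rw [my_filter_lt_eq_map hk2, Finset.sum_map]
    rfl
  -- E.det is a nonzero polynomial: evaluate at the 0/1 indicator vector
  have hdetE : E.det ≠ 0 := by
    intro h0
    set w0 : Fin n → F := fun i => if (i : ℕ) < k then 1 else 0 with hw0
    have h2 : E.map (MvPolynomial.eval w0)
        = (Matrix.vandermonde a')ᵀ * Matrix.vandermonde a' := by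
      ext j l
      rw [Matrix.map_apply, hEeval, Matrix.mul_apply]
      have hterm : ∀ i : Fin n, (w0 i * a i ^ (j : ℕ)) * (w0 i * a i ^ (l : ℕ))
          = if (i : ℕ) < k then a i ^ (j : ℕ) * a i ^ (l : ℕ) else 0 := by
        intro i; by_cases hik : (i : ℕ) < k <;> simp [hw0, hik]
      rw [Finset.sum_congr rfl fun i _ => hterm i, ← Finset.sum_filter, hsum]
      simp [Matrix.vandermonde, ha']
    have h1 := RingHom.map_det (MvPolynomial.eval w0) E
    rw [RingHom.mapMatrix_apply] at h1
    rw [h0, map_zero, h2, Matrix.det_mul, Matrix.det_transpose] at h1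
    replace h1 := h1.symm
    exact hVdet (by
      rcases mul_eq_zero.mp h1 with h | h <;> exact h)
  -- total degree bound
  have hEdeg : ∀ j l, (E j l).totalDegree ≤ 2 := by
    intro j l
    rw [hEapp]
    refine le_trans (MvPolynomial.totalDegree_finset_sum _ _) (Finset.sup_le fun i _ => ?_)
    refine le_trans (MvPolynomial.totalDegree_mul _ _) ?_
    have hb : ∀ c : F,
        (MvPolynomial.X i * MvPolynomial.C c : MvPolynomial (Fin n) F).totalDegree ≤ 1 := by
      intro c
      refine le_trans (MvPolynomial.totalDegree_mul _ _) ?_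
      simp [MvPolynomial.totalDegree_X, MvPolynomial.totalDegree_C]
    exact le_trans (add_le_add (hb _) (hb _)) (by norm_num)
  set P : MvPolynomial (Fin n) F := (∏ i, MvPolynomial.X i) * E.det with hP
  have hPne : P ≠ 0 := by
    refine mul_ne_zero (Finset.prod_ne_zero_iff.mpr fun i _ => MvPolynomial.X_ne_zero i) hdetE
  have hPdeg : P.totalDegree < Fintype.card F := by
    have h1 : (∏ i : Fin n, MvPolynomial.X i : MvPolynomial (Fin n) F).totalDegree ≤ n := by
      refine le_trans (MvPolynomial.totalDegree_finset_prod _ _) ?_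
      simp [MvPolynomial.totalDegree_X]
    have h2 : E.det.totalDegree ≤ k * 2 := my_totalDegree_det_le E hEdeg
    have h3 := MvPolynomial.totalDegree_mul (∏ i, MvPolynomial.X i : MvPolynomial (Fin n) F) E.det
    rw [← hP] at h3
    omega
  obtain ⟨w, hw⟩ := my_sz n P hPne hPdeg
  rw [hP, _root_.map_mul] at hw
  have hwne : ∀ i, w i ≠ 0 := by
    intro i hi
    apply hw
    apply mul_eq_zero_of_left
    rw [map_prod]
    exact Finset.prod_eq_zero (Finset.mem_univ i) (by simp [hi])
  have hdetw : (E.map (MvPolynomial.eval w)).det ≠ 0 := by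
    have h1 := RingHom.map_det (MvPolynomial.eval w) E
    rw [RingHom.mapMatrix_apply] at h1
    rw [← h1]
    exact fun h => hw (mul_eq_zero_of_right _ h)
  -- the generator matrix
  set G : Matrix (Fin k) (Fin n) F := Matrix.of fun j i => w i * a i ^ (j : ℕ) with hG
  have hGram : (G * Gᵀ).det ≠ 0 := by
    have : G * Gᵀ = E.map (MvPolynomial.eval w) := by
      ext j l
      rw [Matrix.mul_apply, Matrix.map_apply, hEeval]
      simp [hG, Matrix.transpose_apply]
    rw [this]; exact hdetw
  set φ := G.vecMulLinear with hφ
  have hφapp : ∀ (y : Fin k → F) (i : Fin n),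
      φ y i = ∑ j, y j * (w i * a i ^ (j : ℕ)) := by
    intro y i
    simp [hφ, Matrix.vecMulLinear, Matrix.vecMul, dotProduct, hG]
  -- injectivity of the encoding map
  have hker : ∀ y : Fin k → F, φ y = 0 → y = 0 := by
    intro y hy
    have hvan : (Matrix.vandermonde a').mulVec y = 0 := by
      funext i
      have h1 : φ y (Fin.castLE hk2 i) = 0 := by rw [hy]; rfl
      rw [hφapp] at h1
      have h2 : w (Fin.castLE hk2 i) * ∑ j, y j * a (Fin.castLE hk2 i) ^ (j : ℕ) = 0 := by
        rw [Finset.mul_sum, ← h1]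
        exact Finset.sum_congr rfl fun j _ => by ring
      have h3 := (mul_eq_zero.mp h2).resolve_left (hwne _)
      show ∑ j, Matrix.vandermonde a' i j * y j = 0
      rw [← h3]
      exact Finset.sum_congr rfl fun j _ => by
        simp [Matrix.vandermonde, ha', mul_comm]
    exact my_mulVec_eq_zero hVdet hvan
  have hφinj : Function.Injective φ := by
    intro y z h
    have h0 := hker (y - z) (by rw [map_sub, h, sub_self])
    exact sub_eq_zero.mp h0
  have hrank : Module.finrank F (LinearMap.range φ) = k := by
    rw [LinearMap.finrank_range_of_inj hφinj]
    simp
  -- codewords are scaled polynomial evaluations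
  have hcode : ∀ (y : Fin k → F) (f : Polynomial F),
      (∀ x, Polynomial.eval x f = ∑ j : Fin k, y j * x ^ (j : ℕ)) →
      ∀ i, φ y i = w i * Polynomial.eval (a i) f := by
    intro y f hf i
    rw [hφapp, hf, Finset.mul_sum]
    exact Finset.sum_congr rfl fun j _ => by ring
  have hwt_eq : ∀ (y : Fin k → F) (f : Polynomial F),
      (∀ i, φ y i = w i * Polynomial.eval (a i) f) →
      wt (φ y) = (Finset.univ.filter fun i : Fin n => ¬ Polynomial.eval (a i) f = 0).card := by
    intro y f hf
    rw [wt]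
    congr 1
    apply Finset.filter_congr
    intro i _
    rw [hf i]
    constructor
    · intro h h0; exact h (by rw [h0, mul_zero])
    · intro h hm; exact h ((mul_eq_zero.mp hm).resolve_left (hwne i))
  -- the minimum distance lower bound
  have hlower : ∀ c ∈ LinearMap.range φ, c ≠ 0 → n - k + 1 ≤ wt c := by
    rintro c ⟨y, rfl⟩ hc0
    have hy0 : y ≠ 0 := fun h => hc0 (by rw [h, map_zero])
    set f : Polynomial F := ∑ j : Fin k, Polynomial.C (y j) * Polynomial.X ^ (j : ℕ) with hf
    have hfeval : ∀ x, Polynomial.eval x f = ∑ j : Fin k, y j * x ^ (j : ℕ) := by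
      intro x
      rw [hf, Polynomial.eval_finset_sum]
      simp
    have hcoeff : ∀ m : Fin k, f.coeff (m : ℕ) = y m := by
      intro m
      rw [hf, Polynomial.finset_sum_coeff, Finset.sum_eq_single m]
      · simp
      · intro j _ hj
        rw [Polynomial.coeff_C_mul, Polynomial.coeff_X_pow, if_neg, mul_zero]
        exact fun h => hj (Fin.ext h.symm)
      · intro h; exact absurd (Finset.mem_univ m) h
    obtain ⟨j0, hj0⟩ := Function.ne_iff.mp hy0
    rw [Pi.zero_apply] at hj0
    have hfne : f ≠ 0 := fun h => hj0 (by rw [← hcoeff j0, h, Polynomial.coeff_zero])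
    have hfdeg : f.natDegree ≤ k - 1 := by
      rw [hf]
      apply Polynomial.natDegree_sum_le_of_forall_le
      intro j _
      refine le_trans (Polynomial.natDegree_C_mul_X_pow_le _ _) ?_
      have := j.isLt; omega
    have hzero : (Finset.univ.filter fun i : Fin n => Polynomial.eval (a i) f = 0).card ≤ k - 1 := by
      have himg : (Finset.univ.filter fun i : Fin n => Polynomial.eval (a i) f = 0).image a
          ⊆ f.roots.toFinset := by
        intro x hx
        obtain ⟨i, hi, rfl⟩ := Finset.mem_image.mp hx
        rw [Multiset.mem_toFinset, Polynomial.mem_roots hfne]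
        exact (Finset.mem_filter.mp hi).2
      calc (Finset.univ.filter fun i : Fin n => Polynomial.eval (a i) f = 0).card
          = ((Finset.univ.filter fun i : Fin n => Polynomial.eval (a i) f = 0).image a).card :=
            (Finset.card_image_of_injective _ a.injective).symm
        _ ≤ f.roots.toFinset.card := Finset.card_le_card himg
        _ ≤ Multiset.card f.roots := Multiset.toFinset_card_le _
        _ ≤ f.natDegree := Polynomial.card_roots' f
        _ ≤ k - 1 := hfdeg
    have hcnt := Finset.card_filter_add_card_filter_not
      (s := (Finset.univ : Finset (Fin n))) (p := fun i : Fin n => Polynomial.eval (a i) f = 0)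
    rw [Finset.card_univ, Fintype.card_fin] at hcnt
    rw [hwt_eq y f (hcode y f hfeval)]
    omega
  -- the minimum weight codeword
  have hkn : k - 1 ≤ n := by omega
  set f0 : Polynomial F :=
    ∏ j : Fin (k - 1), (Polynomial.X - Polynomial.C (a (Fin.castLE hkn j))) with hf0
  have hf0deg : f0.natDegree = k - 1 := by
    rw [hf0, Polynomial.natDegree_prod _ _ fun j _ => Polynomial.X_sub_C_ne_zero _]
    simp [Polynomial.natDegree_X_sub_C]
  set y0 : Fin k → F := fun j => f0.coeff (j : ℕ) with hy0'
  have heval0 : ∀ x : F, Polynomial.eval x f0 = ∑ j : Fin k, y0 j * x ^ (j : ℕ) := by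
    intro x
    rw [Polynomial.eval_eq_sum_range' (show f0.natDegree < k by rw [hf0deg]; omega) x]
    exact (Fin.sum_univ_eq_sum_range (fun m => f0.coeff m * x ^ m) k).symm
  have hz : ∀ i : Fin n, Polynomial.eval (a i) f0 = 0 ↔ (i : ℕ) < k - 1 := by
    intro i
    rw [hf0, Polynomial.eval_prod, Finset.prod_eq_zero_iff]
    constructor
    · rintro ⟨j, -, hj⟩
      rw [Polynomial.eval_sub, Polynomial.eval_X, Polynomial.eval_C, sub_eq_zero] at hj
      have h4 := a.injective hj
      rw [h4]
      simpa using j.isLt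
    · intro hi
      refine ⟨⟨(i : ℕ), hi⟩, Finset.mem_univ _, ?_⟩
      have h4 : Fin.castLE hkn ⟨(i : ℕ), hi⟩ = i := rfl
      rw [h4, Polynomial.eval_sub, Polynomial.eval_X, Polynomial.eval_C, sub_self]
  have hwtc0 : wt (φ y0) = n - k + 1 := by
    rw [hwt_eq y0 f0 (hcode y0 f0 heval0)]
    have heq : (Finset.univ.filter fun i : Fin n => ¬ Polynomial.eval (a i) f0 = 0)
        = Finset.univ.filter fun i : Fin n => ¬ (i : ℕ) < k - 1 := by
      apply Finset.filter_congr
      intro i _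
      exact not_congr (hz i)
    rw [heq]
    have h1 := Finset.card_filter_add_card_filter_not
      (s := (Finset.univ : Finset (Fin n))) (p := fun i : Fin n => (i : ℕ) < k - 1)
    rw [Finset.card_univ, Fintype.card_fin] at h1
    have h2 : (Finset.univ.filter fun i : Fin n => (i : ℕ) < k - 1).card = k - 1 := by
      rw [my_filter_lt_eq_map hkn, Finset.card_map, Finset.card_univ, Fintype.card_fin]
    omega
  have hc0ne : φ y0 ≠ 0 := by
    intro h
    have h0 : wt (φ y0) = 0 := by rw [h]; simp [wt]
    omega
  -- LCD
  have hLCD : IsLCD (LinearMap.range φ) := by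
    rw [IsLCD, eq_bot_iff]
    rintro c hc
    obtain ⟨hcC, hcD⟩ := Submodule.mem_inf.mp hc
    obtain ⟨y, rfl⟩ := hcC
    have hrow : ∀ j : Fin k, (G.mulVec (φ y)) j = 0 := by
      intro j
      have hmem : (fun i => G j i) ∈ LinearMap.range φ := by
        refine ⟨Pi.single j 1, ?_⟩
        funext i
        rw [hφapp, Finset.sum_eq_single j]
        · simp [hG]
        · intro b _ hb
          simp [Pi.single_eq_of_ne hb]
        · intro h; exact absurd (Finset.mem_univ j) h
      have h0 := hcD _ hmem
      show (∑ i, G j i * (φ y) i) = 0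
      rw [← h0]
      exact Finset.sum_congr rfl fun i _ => mul_comm _ _
    have hGc : G.mulVec (φ y) = 0 := funext hrow
    have hvecmul : φ y = Gᵀ.mulVec y := by
      rw [Matrix.mulVec_transpose]
      rfl
    rw [hvecmul, Matrix.mulVec_mulVec] at hGc
    have hyz := my_mulVec_eq_zero hGram hGc
    rw [Submodule.mem_bot, hyz, map_zero]
  exact ⟨LinearMap.range φ, hrank, hLCD, ⟨⟨φ y0, ⟨y0, rfl⟩, hc0ne, hwtc0⟩, hlower⟩⟩
end

section
/- For any odd prime power q = r^2 that is a perfect square, and for any n such that 2n − 1 is an odd divisor of q − 1, for every k with 1 ≤ k ≤ n there exists an MDS LCD [n,k] code over F_q. -/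
section AuxLemmas

open Polynomial Finset

/-- A polynomial of degree < k vanishing at k distinct points gives zero coefficients. -/
lemma myVanish {F : Type*} [Field F] {k : ℕ} (b c : Fin k → F)
    (hb : Function.Injective b)
    (h : ∀ i, ∑ j, c j * b i ^ (j : ℕ) = 0) : c = 0 := by
  rcases Nat.eq_zero_or_pos k with hk | hk
  · subst hk; funext j; exact j.elim0
  set p : F[X] := ∑ j : Fin k, Polynomial.monomial (j : ℕ) (c j) with hp
  have heval : ∀ x : F, p.eval x = ∑ j, c j * x ^ (j : ℕ) := by
    intro x
    simp [hp, Polynomial.eval_finset_sum, Polynomial.eval_monomial]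
  have hdeg : p.natDegree < k := by
    have h1 := Polynomial.natDegree_sum_le_of_forall_le Finset.univ
      (fun j : Fin k => Polynomial.monomial (j : ℕ) (c j)) (n := k - 1) ?_
    · rw [← hp] at h1; omega
    · intro j _
      exact le_trans (Polynomial.natDegree_monomial_le _) (by omega)
  have hp0 : p = 0 := by
    apply Polynomial.eq_zero_of_natDegree_lt_card_of_eval_eq_zero p hb
    · intro i; rw [heval]; exact h i
    · simpa using hdeg
  funext j
  have : p.coeff (j : ℕ) = c j := by
    rw [hp, Polynomial.finset_sum_coeff]
    rw [Finset.sum_eq_single j]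
    · simp
    · intro j' _ hj'
      rw [Polynomial.coeff_monomial, if_neg]
      exact fun hc => hj' (Fin.ext hc)
    · simp
  rw [hp0] at this
  simpa using this.symm

/-- Cauchy-matrix injectivity. -/
lemma myCauchy {F : Type*} [Field F] {k : ℕ} (x y c : Fin k → F)
    (hx : Function.Injective x) (hy : Function.Injective y)
    (hxy : ∀ j l, x j + y l ≠ 0)
    (h : ∀ l, ∑ j, c j * (x j + y l)⁻¹ = 0) : c = 0 := by
  set p : F[X] := ∑ j : Fin k, Polynomial.C (c j) *
      ∏ j' ∈ Finset.univ.erase j, (X + Polynomial.C (x j')) with hp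
  have heval : ∀ z : F, p.eval z = ∑ j, c j * ∏ j' ∈ Finset.univ.erase j, (x j' + z) := by
    intro z
    simp only [hp, Polynomial.eval_finset_sum, Polynomial.eval_mul, Polynomial.eval_C,
      Polynomial.eval_prod, Polynomial.eval_add, Polynomial.eval_X]
    exact Finset.sum_congr rfl fun j _ => by
      congr 1
      exact Finset.prod_congr rfl fun j' _ => add_comm _ _
  have hdeg : p.natDegree < k ∨ k = 0 := by
    rcases Nat.eq_zero_or_pos k with hk | hk
    · exact Or.inr hk
    refine Or.inl ?_
    have : p.natDegree ≤ k - 1 := by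
      apply Polynomial.natDegree_sum_le_of_forall_le
      intro j _
      refine le_trans (Polynomial.natDegree_C_mul_le _ _) ?_
      refine le_trans (Polynomial.natDegree_prod_le _ _) ?_
      calc ∑ j' ∈ Finset.univ.erase j, (X + Polynomial.C (x j')).natDegree
          ≤ ∑ j' ∈ Finset.univ.erase j, 1 := by
            apply Finset.sum_le_sum
            intro j' _
            simpa using Polynomial.natDegree_X_add_C_le (x j')
        _ = k - 1 := by simp [Finset.card_erase_of_mem]
    omega
  rcases hdeg with hdeg | hk
  swap
  · subst hk; funext j; exact j.elim0
  have hp0 : p = 0 := by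
    apply Polynomial.eq_zero_of_natDegree_lt_card_of_eval_eq_zero p hy
    · intro l
      rw [heval]
      have key : ∀ j : Fin k, c j * ∏ j' ∈ Finset.univ.erase j, (x j' + y l)
          = (c j * (x j + y l)⁻¹) * ∏ j' : Fin k, (x j' + y l) := by
        intro j
        rw [← Finset.mul_prod_erase Finset.univ _ (Finset.mem_univ j)]
        field_simp [hxy j l]
      rw [Finset.sum_congr rfl (fun j _ => key j), ← Finset.sum_mul, h l, zero_mul]
    · simp only [Fintype.card_fin]; exact hdeg
  funext j
  have h2 : p.eval (-(x j)) = c j * ∏ j' ∈ Finset.univ.erase j, (x j' - x j) := by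
    rw [heval]
    rw [Finset.sum_eq_single j]
    · simp [sub_eq_add_neg]
    · intro j' _ hj'
      have : ∏ j'' ∈ Finset.univ.erase j', (x j'' + -(x j)) = 0 := by
        apply Finset.prod_eq_zero (Finset.mem_erase.mpr ⟨Ne.symm hj', Finset.mem_univ j⟩)
        ring
      rw [this, mul_zero]
    · simp
  rw [hp0] at h2
  have h3 : ∏ j' ∈ Finset.univ.erase j, (x j' - x j) ≠ 0 := by
    apply Finset.prod_ne_zero_iff.mpr
    intro j' hj'
    have : x j' ≠ x j := fun hc => (Finset.mem_erase.mp hj').1 (hx hc)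
    exact sub_ne_zero_of_ne this
  have h4 := h2.symm
  simp only [Polynomial.eval_zero] at h4
  have h5 := mul_eq_zero.mp h4
  simp only [Pi.zero_apply]
  tauto

lemma myDistinct {F : Type*} [Field F] {m : ℕ} {β : F} (hβ0 : β ≠ 0)
    (hmin : ∀ t, 0 < t → t < m → β ^ t ≠ 1) :
    ∀ s t, s < m → t < m → β ^ s = β ^ t → s = t := by
  have key : ∀ s t, s ≤ t → t < m → β ^ s = β ^ t → s = t := by
    intro s t hst htm he
    by_contra hne
    have h1 : β ^ s * β ^ (t - s) = β ^ s * 1 := by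
      rw [← pow_add, mul_one]
      rw [show s + (t - s) = t by omega]
      exact he.symm
    have h2 : β ^ (t - s) = 1 := mul_left_cancel₀ (pow_ne_zero s hβ0) h1
    exact hmin (t - s) (by omega) (by omega) h2
  intro s t hsm htm he
  rcases le_total s t with h | h
  · exact key s t h htm he
  · exact (key t s h hsm he.symm).symm

lemma myGeom {F : Type*} [Field F] {m n : ℕ} (hm : m = 2 * n - 1) (hn : 1 ≤ n) {β : F}
    (hβ1 : β ^ m = 1)
    (hmin : ∀ t, 0 < t → t < m → β ^ t ≠ 1) :
    ∀ t, 0 < t → t < m → (1 + β ^ t) * (∑ i : Fin n, β ^ (2 * (i : ℕ) * t)) = 1 := by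
  intro t ht htm
  have hS : ∑ i : Fin n, β ^ (2 * (i : ℕ) * t) = ∑ i ∈ Finset.range n, (β ^ (2 * t)) ^ i := by
    rw [Fin.sum_univ_eq_sum_range (fun j => β ^ (2 * j * t)) n]
    exact Finset.sum_congr rfl fun i _ => by rw [← pow_mul]; congr 1; ring
  have hgeom := geom_sum_mul (β ^ (2 * t)) n
  have hxn : (β ^ (2 * t)) ^ n = β ^ t := by
    rw [← pow_mul]
    have h1 : 2 * t * n = t * m + t := by
      have h2 : 2 * n = m + 1 := by omega
      calc 2 * t * n = t * (2 * n) := by ring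
        _ = t * (m + 1) := by rw [h2]
        _ = t * m + t := by ring
    rw [h1, pow_add, mul_comm t m, pow_mul, hβ1, one_pow, one_mul]
  have hfac : β ^ (2 * t) - 1 = (β ^ t - 1) * (β ^ t + 1) := by
    have : β ^ (2 * t) = (β ^ t) ^ 2 := by rw [← pow_mul]; congr 1; ring
    rw [this]; ring
  have hu : β ^ t - 1 ≠ 0 := sub_ne_zero_of_ne (hmin t ht htm)
  apply mul_left_cancel₀ hu
  rw [mul_one]
  calc (β ^ t - 1) * ((1 + β ^ t) * ∑ i : Fin n, β ^ (2 * (i : ℕ) * t))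
      = (∑ i ∈ Finset.range n, (β ^ (2 * t)) ^ i) * ((β ^ t - 1) * (β ^ t + 1)) := by
        rw [hS]; ring
    _ = (∑ i ∈ Finset.range n, (β ^ (2 * t)) ^ i) * (β ^ (2 * t) - 1) := by rw [hfac]
    _ = (β ^ (2 * t)) ^ n - 1 := hgeom
    _ = β ^ t - 1 := by rw [hxn]

lemma myPrimRoot {F : Type*} [Field F] [Fintype F] {m : ℕ} (hm : 0 < m)
    (hdvd : m ∣ Fintype.card F - 1) :
    ∃ β : F, β ≠ 0 ∧ β ^ m = 1 ∧ ∀ t, 0 < t → t < m → β ^ t ≠ 1 := by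
  classical
  obtain ⟨g, hg⟩ := IsCyclic.exists_generator (α := Fˣ)
  have hcard : orderOf g = Fintype.card F - 1 := by
    rw [orderOf_eq_card_of_forall_mem_zpowers hg, Nat.card_eq_fintype_card, Fintype.card_units]
  have hq1 : 0 < Fintype.card F - 1 := by
    have := Fintype.one_lt_card (α := F)
    omega
  have hou : orderOf (g ^ ((Fintype.card F - 1) / m)) = m := by
    rw [← hcard]
    exact orderOf_pow_orderOf_div (by omega) (by rw [hcard]; exact hdvd)
  set u := g ^ ((Fintype.card F - 1) / m) with hu
  refine ⟨(u : F), Units.ne_zero u, ?_, ?_⟩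
  · rw [← Units.val_pow_eq_pow_val, ← hou, pow_orderOf_eq_one, Units.val_one]
  · intro t ht htm hc
    have h1 : u ^ t = 1 := by
      ext
      rw [Units.val_pow_eq_pow_val, hc, Units.val_one]
    have h2 := orderOf_dvd_of_pow_eq_one h1
    rw [hou] at h2
    have := Nat.le_of_dvd ht h2
    omega

lemma myNegOne {F : Type*} [Field F] [Fintype F] (hodd : Odd (Fintype.card F)) :
    (-1 : F) ≠ 1 := by
  apply Ring.neg_one_ne_one_of_char_ne_two
  intro h2
  have := FiniteField.even_card_of_char_two h2
  have := Nat.odd_iff.mp hodd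
  omega

lemma myFilterCard {n c : ℕ} (hc : c ≤ n) :
    (Finset.univ.filter (fun i : Fin n => (i : ℕ) < c)).card = c := by
  classical
  have : Finset.univ.filter (fun i : Fin n => (i : ℕ) < c)
      = Finset.image (Fin.castLE hc) Finset.univ := by
    ext i
    simp only [Finset.mem_filter, Finset.mem_univ, true_and, Finset.mem_image]
    constructor
    · intro hi; exact ⟨⟨(i : ℕ), hi⟩, by ext; simp⟩
    · rintro ⟨j, -, rfl⟩; exact j.2
  rw [this, Finset.card_image_of_injective _ (Fin.castLE_injective hc), Finset.card_univ,
    Fintype.card_fin]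

open Classical in
lemma wt_eq_filter {R : Type*} [Zero R] {n : ℕ} (x : Fin n → R) :
    wt x = (Finset.univ.filter fun i => x i ≠ 0).card := rfl

open Classical in
lemma wt_add_eq {R : Type*} [Zero R] {n : ℕ} (x : Fin n → R) :
    (Finset.univ.filter fun i => x i = 0).card + wt x = n := by
  rw [wt_eq_filter]
  have := Finset.card_filter_add_card_filter_not
    (s := (Finset.univ : Finset (Fin n))) (p := fun i => x i = 0)
  rw [Finset.card_univ, Fintype.card_fin] at this
  exact this

lemma wt_pos {R : Type*} [Zero R] {n : ℕ} {x : Fin n → R} (hx : x ≠ 0) : 1 ≤ wt x := by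
  classical
  obtain ⟨i, hi⟩ := Function.ne_iff.mp hx
  rw [wt_eq_filter]
  exact Finset.card_pos.mpr ⟨i, Finset.mem_filter.mpr ⟨Finset.mem_univ i, hi⟩⟩

end AuxLemmas

/-- For any odd prime power `q = r^2` which is a perfect square, and any `n` such that
`2n - 1` is an odd divisor of `q - 1`, for every `1 ≤ k ≤ n` there exists an MDS LCD
`[n, k]` code over `F_q`. -/
theorem exists_mds_lcd_square_divisor {F : Type*} [Field F] [Fintype F] {r n k : ℕ}
    (hodd : Odd (Fintype.card F))
    (hq : Fintype.card F = r ^ 2)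
    (hodd' : Odd (2 * n - 1))
    (hdvd : (2 * n - 1) ∣ (Fintype.card F - 1))
    (hk1 : 1 ≤ k) (hk2 : k ≤ n) :
    ∃ C : Submodule F (Fin n → F),
      Module.finrank F C = k ∧ IsLCD C ∧ hasMinDist C (n - k + 1) := by
  classical
  rcases eq_or_lt_of_le hk2 with heq | hkn
  · -- k = n : take the full space
    subst heq
    have hk0 : 0 < k := hk1
    refine ⟨⊤, ?_, ?_, ⟨?_, ?_⟩⟩
    · rw [finrank_top, Module.finrank_fin_fun]
    · rw [IsLCD, eq_bot_iff]
      intro x hx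
      obtain ⟨-, hx2⟩ := Submodule.mem_inf.mp hx
      have hz : ∀ i, x i = 0 := by
        intro i
        have h1 := hx2 (Pi.single i 1) Submodule.mem_top
        simpa [Pi.single_apply] using h1
      exact (Submodule.mem_bot F).mpr (funext hz)
    · refine ⟨Pi.single (⟨0, hk0⟩ : Fin k) 1, Submodule.mem_top, ?_, ?_⟩
      · intro h
        have := congrFun h (⟨0, hk0⟩ : Fin k)
        simp at this
      · have h1 : wt (Pi.single (⟨0, hk0⟩ : Fin k) (1 : F))
            = ({(⟨0, hk0⟩ : Fin k)} : Finset (Fin k)).card := by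
          rw [wt_eq_filter]
          congr 1
          ext i
          by_cases h : i = (⟨0, hk0⟩ : Fin k) <;> simp [h, Pi.single_apply]
        rw [h1, Finset.card_singleton]
        omega
    · intro c _ hc
      have := wt_pos hc
      omega
  · -- k < n : generalized Reed-Solomon construction
    have hn1 : 1 ≤ n := by omega
    set m := 2 * n - 1 with hm
    have hm0 : 0 < m := by omega
    obtain ⟨β, hβ0, hβ1, hmin⟩ := myPrimRoot hm0 hdvd
    have hdist := myDistinct hβ0 hmin
    have hdvd1 : ∀ s : ℕ, β ^ s = 1 → m ∣ s := by
      intro s hs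
      have hmod : β ^ (s % m) = 1 := by
        have hsplit : m * (s / m) + s % m = s := Nat.div_add_mod s m
        rw [← hsplit, pow_add, pow_mul, hβ1, one_pow, one_mul] at hs
        exact hs
      rcases Nat.eq_zero_or_pos (s % m) with h | h
      · exact Nat.dvd_of_mod_eq_zero h
      · exact absurd hmod (hmin _ h (Nat.mod_lt _ hm0))
    have hneg : ∀ t : ℕ, β ^ t ≠ -1 := by
      intro t hc
      have h2t : β ^ (t * 2) = 1 := by
        rw [pow_mul, hc]; ring
      have hmd : m ∣ t * 2 := hdvd1 _ h2t
      have hcop : Nat.Coprime m 2 := by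
        rw [Nat.coprime_two_right]
        exact hodd'
      have hmt : m ∣ t := (Nat.Coprime.dvd_of_dvd_mul_right hcop) hmd
      obtain ⟨s, rfl⟩ := hmt
      rw [pow_mul, hβ1, one_pow] at hc
      exact (myNegOne hodd) hc.symm
    have hone : ∀ t : ℕ, (1 : F) + β ^ t ≠ 0 := by
      intro t h
      exact hneg t (eq_neg_of_add_eq_zero_right h)
    set a : Fin n → F := fun i => β ^ (2 * (i : ℕ)) with ha
    set v : Fin n → F := fun i => β ^ (i : ℕ) with hv
    set G : Matrix (Fin k) (Fin n) F := Matrix.of fun j i => v i * a i ^ (j : ℕ) with hG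
    have hv0 : ∀ i, v i ≠ 0 := fun i => pow_ne_zero _ hβ0
    have ha_inj : Function.Injective a := by
      intro i j h
      have h1 : 2 * (i : ℕ) = 2 * (j : ℕ) :=
        hdist _ _ (by have := i.2; omega) (by have := j.2; omega) h
      exact Fin.ext (by omega)
    have hfac : ∀ (c : Fin k → F) (i : Fin n),
        (Matrix.vecMulLinear G) c i = v i * ∑ j, c j * a i ^ (j : ℕ) := by
      intro c i
      show ∑ j, c j * G j i = _
      rw [Finset.mul_sum]
      exact Finset.sum_congr rfl fun j _ => by rw [hG]; simp [Matrix.of_apply]; ring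
    have hcore : ∀ c : Fin k → F,
        (∀ i : Fin n, (Matrix.vecMulLinear G) c i = 0) → c = 0 := by
      intro c hc
      apply myVanish (fun j : Fin k => a (Fin.castLE hk2 j)) c
        (ha_inj.comp (Fin.castLE_injective hk2))
      intro i
      have h1 := hc (Fin.castLE hk2 i)
      rw [hfac] at h1
      exact (mul_eq_zero.mp h1).resolve_left (hv0 _)
    have hLinj : Function.Injective (Matrix.vecMulLinear G) := by
      rw [← LinearMap.ker_eq_bot, LinearMap.ker_eq_bot']
      intro c hcc
      exact hcore c fun i => congrFun hcc i
    refine ⟨LinearMap.range (Matrix.vecMulLinear G), ?_, ?_, ⟨?_, ?_⟩⟩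
    · rw [LinearMap.finrank_range_of_inj hLinj, Module.finrank_fin_fun]
    · -- LCD
      rw [IsLCD, eq_bot_iff]
      rintro x hx
      obtain ⟨hx1, hx2⟩ := Submodule.mem_inf.mp hx
      obtain ⟨c, rfl⟩ := hx1
      suffices hc0 : c = 0 by
        rw [hc0, map_zero]; exact Submodule.zero_mem ⊥
      -- The Gram conditions
      have hGram : ∀ l : Fin k,
          ∑ j : Fin k, c j * (1 + β ^ ((j : ℕ) + (l : ℕ) + 1))⁻¹ = 0 := by
        intro l
        have hrow : (Matrix.vecMulLinear G) (Pi.single l 1)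
            ∈ LinearMap.range (Matrix.vecMulLinear G) := LinearMap.mem_range_self _ _
        have h1 := hx2 _ hrow
        have hd : ∀ i : Fin n, (Matrix.vecMulLinear G) (Pi.single l 1) i = G l i := by
          intro i
          rw [hfac]
          rw [Finset.sum_eq_single l]
          · rw [hG]; simp [Matrix.of_apply]
          · intro j _ hj; simp [Pi.single_apply, hj]
          · simp
        rw [Finset.sum_congr rfl (fun i _ => by rw [hd i, hfac])] at h1
        -- h1 : ∑ i, (v i * ∑ j, c j * a i ^ j) * G l i = 0
        have h2 : ∀ i : Fin n, (v i * ∑ j, c j * a i ^ (j : ℕ)) * G l i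
            = ∑ j : Fin k, c j * β ^ (2 * (i : ℕ) * ((j : ℕ) + (l : ℕ) + 1)) := by
          intro i
          calc (v i * ∑ j : Fin k, c j * a i ^ (j : ℕ)) * G l i
              = ∑ j : Fin k, v i * (c j * a i ^ (j : ℕ)) * G l i := by
                rw [Finset.mul_sum, Finset.sum_mul]
            _ = ∑ j : Fin k, c j * β ^ (2 * (i : ℕ) * ((j : ℕ) + (l : ℕ) + 1)) := by
                refine Finset.sum_congr rfl fun j _ => ?_
                show v i * (c j * a i ^ (j : ℕ)) * G l i
                  = c j * β ^ (2 * (i : ℕ) * ((j : ℕ) + (l : ℕ) + 1))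
                rw [hG]
                simp only [Matrix.of_apply, ha, hv]
                rw [← pow_mul, ← pow_mul]
                rw [show β ^ (i:ℕ) * (c j * β ^ (2 * (i:ℕ) * (j:ℕ))) *
                    (β ^ (i:ℕ) * β ^ (2 * (i:ℕ) * (l:ℕ)))
                  = c j * (β ^ (i:ℕ) * β ^ (2 * (i:ℕ) * (j:ℕ)) * β ^ (i:ℕ)
                    * β ^ (2 * (i:ℕ) * (l:ℕ))) by ring]
                rw [← pow_add, ← pow_add, ← pow_add]
                congr 2
                ring
        rw [Finset.sum_congr rfl (fun i _ => h2 i), Finset.sum_comm] at h1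
        -- h1 : ∑ j, ∑ i, c j * β ^ (2 i (j+l+1)) = 0
        have h3 : ∀ j : Fin k,
            ∑ i : Fin n, c j * β ^ (2 * (i : ℕ) * ((j : ℕ) + (l : ℕ) + 1))
            = c j * (1 + β ^ ((j : ℕ) + (l : ℕ) + 1))⁻¹ := by
          intro j
          rw [← Finset.mul_sum]
          congr 1
          have hlt : (j : ℕ) + (l : ℕ) + 1 < m := by
            have := j.2; have := l.2; omega
          exact eq_inv_of_mul_eq_one_left
            (by rw [mul_comm]; exact myGeom hm hn1 hβ1 hmin _ (by omega) hlt)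
        rw [Finset.sum_congr rfl (fun j _ => h3 j)] at h1
        exact h1
      -- Cauchy matrix argument
      set x' : Fin k → F := fun j => β ^ (m - ((j : ℕ) + 1)) with hx'
      set y' : Fin k → F := fun l => β ^ (l : ℕ) with hy'
      have hjm : ∀ j : Fin k, (j : ℕ) + 1 ≤ m := by
        intro j; have := j.2; omega
      have hsum : ∀ j l : Fin k,
          x' j + y' l = β ^ (m - ((j : ℕ) + 1)) * (1 + β ^ ((j : ℕ) + (l : ℕ) + 1)) := by
        intro j l
        rw [mul_add, mul_one, ← pow_add]
        rw [show m - ((j : ℕ) + 1) + ((j : ℕ) + (l : ℕ) + 1) = m + (l : ℕ) by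
          have := hjm j; omega]
        rw [pow_add, hβ1, one_mul]
      have hx'inj : Function.Injective x' := by
        intro j j' h
        have h1 : m - ((j : ℕ) + 1) = m - ((j' : ℕ) + 1) :=
          hdist _ _ (by have := hjm j; omega) (by have := hjm j'; omega) h
        exact Fin.ext (by have := hjm j; have := hjm j'; omega)
      have hy'inj : Function.Injective y' := by
        intro l l' h
        have h1 : (l : ℕ) = (l' : ℕ) :=
          hdist _ _ (by have := l.2; omega) (by have := l'.2; omega) h
        exact Fin.ext h1
      have hxyne : ∀ j l, x' j + y' l ≠ 0 := by
        intro j l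
        rw [hsum]
        exact mul_ne_zero (pow_ne_zero _ hβ0) (hone _)
      have hc' := myCauchy x' y' (fun j => c j * β ^ (m - ((j : ℕ) + 1)))
        hx'inj hy'inj hxyne ?_
      · funext j
        have := congrFun hc' j
        simp only [Pi.zero_apply] at this ⊢
        rcases mul_eq_zero.mp this with h | h
        · exact h
        · exact absurd h (pow_ne_zero _ hβ0)
      · intro l
        have hterm : ∀ j : Fin k, c j * β ^ (m - ((j : ℕ) + 1)) * (x' j + y' l)⁻¹
            = c j * (1 + β ^ ((j : ℕ) + (l : ℕ) + 1))⁻¹ := by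
          intro j
          rw [hsum j l, mul_inv]
          rw [show c j * β ^ (m - ((j : ℕ) + 1)) *
              ((β ^ (m - ((j : ℕ) + 1)))⁻¹ * (1 + β ^ ((j : ℕ) + (l : ℕ) + 1))⁻¹)
            = c j * (β ^ (m - ((j : ℕ) + 1)) * (β ^ (m - ((j : ℕ) + 1)))⁻¹)
              * (1 + β ^ ((j : ℕ) + (l : ℕ) + 1))⁻¹ by ring]
          rw [mul_inv_cancel₀ (pow_ne_zero _ hβ0), mul_one]
        rw [Finset.sum_congr rfl (fun j _ => hterm j)]
        exact hGram l
    · -- existence of a codeword of weight n - k + 1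
      set P : Polynomial F :=
        ∏ j ∈ Finset.range (k - 1), (Polynomial.X - Polynomial.C (β ^ (2 * j))) with hP
      set c₀ : Fin k → F := fun j => P.coeff (j : ℕ) with hc₀
      have hPdeg : P.natDegree < k := by
        apply lt_of_le_of_lt (Polynomial.natDegree_prod_le _ _)
        calc ∑ j ∈ Finset.range (k - 1),
              (Polynomial.X - Polynomial.C (β ^ (2 * j))).natDegree
            ≤ ∑ _j ∈ Finset.range (k - 1), 1 := by
              apply Finset.sum_le_sum
              intro j _
              exact Polynomial.natDegree_X_sub_C_le _
          _ = k - 1 := by simp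
          _ < k := by omega
      have heval : ∀ i : Fin n, (Matrix.vecMulLinear G) c₀ i = v i * P.eval (a i) := by
        intro i
        rw [hfac]
        congr 1
        rw [Polynomial.eval_eq_sum_range' hPdeg]
        rw [← Fin.sum_univ_eq_sum_range (fun j => P.coeff j * a i ^ j) k]
      have hevalP : ∀ i : Fin n,
          P.eval (a i) = ∏ j ∈ Finset.range (k - 1), (a i - β ^ (2 * j)) := by
        intro i
        rw [hP]
        simp [Polynomial.eval_prod]
      have hzero : ∀ i : Fin n, (Matrix.vecMulLinear G) c₀ i = 0 ↔ (i : ℕ) < k - 1 := by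
        intro i
        rw [heval i]
        constructor
        · intro h
          rcases mul_eq_zero.mp h with h | h
          · exact absurd h (hv0 i)
          · rw [hevalP] at h
            obtain ⟨j, hjmem, hj0⟩ := Finset.prod_eq_zero_iff.mp h
            have hjr := Finset.mem_range.mp hjmem
            have heq : a i = β ^ (2 * j) := by
              have := sub_eq_zero.mp hj0; exact this
            have hij : 2 * (i : ℕ) = 2 * j := by
              apply hdist _ _ (by have := i.2; omega) (by omega)
              exact heq
            omega
        · intro h
          rw [hevalP]
          apply mul_eq_zero_of_right
          apply Finset.prod_eq_zero (Finset.mem_range.mpr h)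
          rw [ha]
          simp
      refine ⟨(Matrix.vecMulLinear G) c₀, LinearMap.mem_range_self _ _, ?_, ?_⟩
      · intro h
        have hh := congrFun h (⟨k - 1, by omega⟩ : Fin n)
        rw [Pi.zero_apply] at hh
        have := (hzero _).mp hh
        simp at this
      · have h1 : wt ((Matrix.vecMulLinear G) c₀)
            = (Finset.univ.filter fun i : Fin n => ¬ ((i : ℕ) < k - 1)).card := by
          rw [wt_eq_filter]
          congr 1
          ext i
          simp only [Finset.mem_filter, Finset.mem_univ, true_and]
          constructor
          · intro hne hc
            exact hne ((hzero i).mpr hc)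
          · intro hc h0
            exact hc ((hzero i).mp h0)
        have h2 := Finset.card_filter_add_card_filter_not
          (s := (Finset.univ : Finset (Fin n))) (p := fun i : Fin n => (i : ℕ) < k - 1)
        rw [Finset.card_univ, Fintype.card_fin, myFilterCard (by omega)] at h2
        rw [h1]
        omega
    · -- minimum distance lower bound
      intro x hxC hx0
      obtain ⟨c, rfl⟩ := hxC
      have hc0 : c ≠ 0 := fun h => hx0 (by rw [h, map_zero])
      by_contra hlt
      push_neg at hlt
      have hZcard := wt_add_eq ((Matrix.vecMulLinear G) c)
      have hkZ : k ≤ (Finset.univ.filter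
          fun i : Fin n => (Matrix.vecMulLinear G) c i = 0).card := by omega
      obtain ⟨Z', hZ'sub, hZ'card⟩ := Finset.exists_subset_card_eq hkZ
      have he_inj : Function.Injective
          (fun j : Fin k => ((Z'.orderIsoOfFin hZ'card j : Fin n))) := by
        intro j j' h
        exact (Z'.orderIsoOfFin hZ'card).injective (Subtype.ext h)
      apply hc0
      apply myVanish (fun j : Fin k => a ((Z'.orderIsoOfFin hZ'card j : Fin n))) c
        (ha_inj.comp he_inj)
      intro i
      have hmem := hZ'sub (Z'.orderIsoOfFin hZ'card i).2
      have hxi : (Matrix.vecMulLinear G) c ((Z'.orderIsoOfFin hZ'card i : Fin n)) = 0 :=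
        (Finset.mem_filter.mp hmem).2
      rw [hfac] at hxi
      exact (mul_eq_zero.mp hxi).resolve_left (hv0 _)
end

section
/- Let q = p^m with p prime and m > 1, let n be a divisor of q − 1, and let k ≤ ⌊(n−1)/2⌋. Then for every k' with 1 ≤ k' ≤ k there exists an MDS LCD [n−k, k'] code over F_q, i.e., a k'-dimensional LCD subspace of F_q^{n−k} with minimum distance (n−k) − k' + 1. -/
/-!
Take `N = K + R` distinct points `a` of `F` and the generalized Reed–Solomon code of dimension
`K` on them, with column multipliers `1` on the first `K` points and `t` on the last `R`. For
every `t ≠ 0` it is MDS: a nonzero codeword is a polynomial of degree `< K` evaluated at the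
points, so it has at most `K - 1` zeros. In the Lagrange basis of the first `K` points the
generator matrix is `[1 | t A]`, so its Gram matrix is `1 + t² A Aᵀ`, and by Massey's criterion the
code is LCD as soon as this matrix is invertible. Its determinant is a polynomial in `t` of degree
at most `2K` with value `1` at `t = 0`, so it is nonzero at one of the `q - 1 > 2K` nonzero
elements. For the theorem, `n ∣ q - 1` gives `n ≤ q - 1`, and `N = n - k`, `K = k'` fit.
-/

open Polynomial Finset Matrix

section General

variable {F : Type*} [Field F]

theorem isLCD_range_vecMulLinear_s8 {ι : Type*} [Fintype ι] [DecidableEq ι] {N : ℕ}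
    (G : Matrix ι (Fin N) F) (hG : (G * Gᵀ).det ≠ 0) :
    IsLCD (LinearMap.range G.vecMulLinear) := by
  rw [IsLCD, eq_bot_iff]
  rintro _ ⟨⟨u, rfl⟩, hu⟩
  have hGram : u ᵥ* (G * Gᵀ) = 0 := by
    ext l
    have hl := hu _ ⟨Pi.single l 1, rfl⟩
    simp only [vecMulLinear_apply, single_one_vecMul] at hl
    rw [← vecMul_vecMul]
    exact hl
  obtain rfl : u = 0 := by
    by_contra hu0
    exact hG (exists_vecMul_eq_zero_iff.mp ⟨u, hu0, hGram⟩)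
  simp

theorem wt_le_card_sub_card {N : ℕ} {x : Fin N → F} {s : Finset (Fin N)}
    (hs : ∀ i ∈ s, x i = 0) : wt x ≤ N - #s := by
  classical
  calc wt x ≤ #sᶜ := card_le_card fun i hi ↦ by
          simp only [mem_filter] at hi
          exact mem_compl.mpr fun his ↦ hi.2 (hs i his)
    _ = N - #s := by rw [card_compl, Fintype.card_fin]

theorem card_sub_natDegree_le_wt {N : ℕ} {v a : Fin N → F} (hv : ∀ i, v i ≠ 0)
    (ha : Function.Injective a) {p : F[X]} (hp : p ≠ 0) :
    N - p.natDegree ≤ wt fun i ↦ v i * p.eval (a i) := by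
  classical
  have hzeros : #{i | p.eval (a i) = 0} ≤ p.natDegree :=
    calc #{i | p.eval (a i) = 0} ≤ #p.roots.toFinset :=
          card_le_card_of_injOn a (fun i hi ↦ by simp_all) ha.injOn
      _ ≤ p.natDegree := (Multiset.toFinset_card_le _).trans (card_roots' p)
  have hsplit := card_filter_add_card_filter_not (s := univ) fun i : Fin N ↦ p.eval (a i) = 0
  have hwt : wt (fun i ↦ v i * p.eval (a i)) = #{i | ¬p.eval (a i) = 0} := by
    unfold wt
    congr 1
    exact filter_congr fun i _ ↦ by simp [hv i]
  rw [card_univ, Fintype.card_fin] at hsplit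
  omega

theorem eval_det_X_smul_add_C {n R : Type*} [Fintype n] [DecidableEq n] [CommRing R]
    (A B : Matrix n n R) (μ : R) :
    ((X : R[X]) • A.map C + B.map C).det.eval μ = (μ • A + B).det := by
  rw [← coe_evalRingHom, RingHom.map_det, RingHom.mapMatrix_apply]
  congr 1
  ext i j
  simp only [map_apply, Matrix.add_apply, Matrix.smul_apply, smul_eq_mul, coe_evalRingHom,
    eval_add, eval_mul, eval_X, eval_C]

theorem exists_ne_zero_det_sq_smul_add_ne_zero [Fintype F] {n : Type*} [Fintype n]
    [DecidableEq n] (A B : Matrix n n F) (hB : B.det ≠ 0)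
    (hcard : 2 * Fintype.card n + 1 < Fintype.card F) :
    ∃ t : F, t ≠ 0 ∧ (t ^ 2 • A + B).det ≠ 0 := by
  classical
  set Q : F[X] := ((X : F[X]) • A.map C + B.map C).det
  have hQ : ∀ μ, Q.eval μ = (μ • A + B).det := eval_det_X_smul_add_C A B
  have hQdeg : Q.natDegree ≤ Fintype.card n := natDegree_det_X_add_C_le A B
  have hP0 : (Q.comp (X ^ 2)).eval 0 ≠ 0 := by simpa [eval_comp, hQ] using hB
  have hPdeg : (Q.comp (X ^ 2)).natDegree < #(univ.erase (0 : F)) := by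
    rw [natDegree_comp, natDegree_X_pow, card_erase_of_mem (mem_univ _), card_univ]
    omega
  by_contra! h
  refine hP0 ?_
  rw [eq_zero_of_natDegree_lt_card_of_eval_eq_zero' _ _ (fun t ht ↦ ?_) hPdeg, eval_zero]
  rw [eval_comp, eval_pow, eval_X, hQ]
  exact h t (ne_of_mem_erase ht)

end General

section ReedSolomon

theorem Function.Embedding.injOn_comp_castAdd {α : Type*} {K R : ℕ} (a : Fin (K + R) ↪ α) :
    Set.InjOn (a ∘ Fin.castAdd R) (univ : Finset (Fin K)) :=
  (a.injective.comp (Fin.castAdd_injective K R)).injOn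

variable {F : Type*} [Field F] {K R : ℕ} (a : Fin (K + R) ↪ F) (v : Fin (K + R) → F)

/-- Generator matrix of the generalized Reed–Solomon code with evaluation points `a` and column
multipliers `v`, taken in the Lagrange basis of the first `K` points so that it is systematic
there. -/
noncomputable def grsGenMatrix : Matrix (Fin K) (Fin (K + R)) F :=
  of fun j i ↦ v i * (Lagrange.basis univ (a ∘ Fin.castAdd R) j).eval (a i)

theorem vecMul_grsGenMatrix (u : Fin K → F) :
    u ᵥ* grsGenMatrix a v =
      fun i ↦ v i * (Lagrange.interpolate univ (a ∘ Fin.castAdd R) u).eval (a i) := by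
  ext i
  simp only [vecMul, dotProduct, grsGenMatrix, of_apply, Lagrange.interpolate_apply,
    eval_finsetSum, eval_mul, eval_C, mul_sum]
  exact sum_congr rfl fun j _ ↦ by ring

theorem vecMul_grsGenMatrix_castAdd (u : Fin K → F) (j : Fin K) :
    (u ᵥ* grsGenMatrix a v) (Fin.castAdd R j) = v (Fin.castAdd R j) * u j := by
  rw [vecMul_grsGenMatrix]
  exact congrArg _ (Lagrange.eval_interpolate_at_node u a.injOn_comp_castAdd (mem_univ j))

theorem finrank_range_grsGenMatrix (hv : ∀ i, v i ≠ 0) :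
    Module.finrank F (LinearMap.range (grsGenMatrix a v).vecMulLinear) = K := by
  rw [LinearMap.finrank_range_of_inj, Module.finrank_fin_fun]
  intro u w huw
  ext j
  have hj := congrFun huw (Fin.castAdd R j)
  simp only [vecMulLinear_apply, vecMul_grsGenMatrix_castAdd] at hj
  exact mul_left_cancel₀ (hv _) hj

theorem add_one_le_wt_vecMul_grsGenMatrix (hv : ∀ i, v i ≠ 0) {u : Fin K → F} (hu : u ≠ 0) :
    R + 1 ≤ wt (u ᵥ* grsGenMatrix a v) := by
  rw [vecMul_grsGenMatrix]
  set p := Lagrange.interpolate univ (a ∘ Fin.castAdd R) u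
  have hp : p ≠ 0 := fun h ↦ hu <| funext fun j ↦ by
    rw [← Lagrange.eval_interpolate_at_node u a.injOn_comp_castAdd (mem_univ j)]
    simp [p, h]
  have hdeg : p.natDegree < K := (natDegree_lt_iff_degree_lt hp).mpr <|
    (Lagrange.degree_interpolate_lt u a.injOn_comp_castAdd).trans_eq (by simp)
  have := card_sub_natDegree_le_wt hv a.injective hp
  omega

theorem hasMinDist_range_grsGenMatrix (hK : 1 ≤ K) (hv : ∀ i, v i ≠ 0) :
    hasMinDist (LinearMap.range (grsGenMatrix a v).vecMulLinear) (R + 1) := by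
  refine ⟨?_, fun _ ⟨u, hu⟩ hc ↦ ?_⟩
  · set j₀ : Fin K := ⟨0, hK⟩
    have hsingle : (Pi.single j₀ 1 : Fin K → F) ≠ 0 := by simp
    have hlower := add_one_le_wt_vecMul_grsGenMatrix a v hv hsingle
    have hzero : ∀ i ∈ (univ.erase j₀).map (Fin.castAddEmb R),
        ((Pi.single j₀ 1 : Fin K → F) ᵥ* grsGenMatrix a v) i = 0 := by
      simp only [mem_map, mem_erase, Fin.castAddEmb_apply]
      rintro _ ⟨j, ⟨hj, -⟩, rfl⟩
      rw [vecMul_grsGenMatrix_castAdd, Pi.single_eq_of_ne hj, mul_zero]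
    have hupper := wt_le_card_sub_card hzero
    rw [card_map, card_erase_of_mem (mem_univ _), card_univ, Fintype.card_fin] at hupper
    refine ⟨_, ⟨Pi.single j₀ 1, rfl⟩, fun h ↦ ?_, ?_⟩
    · rw [vecMulLinear_apply] at h
      simp [h, wt] at hlower
    · simp only [vecMulLinear_apply]
      omega
  · subst hu
    exact add_one_le_wt_vecMul_grsGenMatrix a v hv fun h ↦ hc (by simp [h])

theorem eval_lagrangeBasis_castAdd (j t : Fin K) :
    (Lagrange.basis univ (a ∘ Fin.castAdd R) j).eval (a (Fin.castAdd R t)) =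
      (1 : Matrix (Fin K) (Fin K) F) j t := by
  obtain rfl | hjt := eq_or_ne j t
  · rw [one_apply_eq]
    exact Lagrange.eval_basis_self a.injOn_comp_castAdd (mem_univ j)
  · rw [one_apply_ne hjt]
    exact Lagrange.eval_basis_of_ne (v := a ∘ Fin.castAdd R) hjt (mem_univ t)

theorem grsGenMatrix_mul_transpose (t : F) :
    grsGenMatrix a (Fin.addCases (fun _ ↦ 1) fun _ ↦ t) *
        (grsGenMatrix a (Fin.addCases (fun _ ↦ 1) fun _ ↦ t))ᵀ =
      t ^ 2 • ((grsGenMatrix a 1).submatrix id (Fin.natAdd K) *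
        ((grsGenMatrix a 1).submatrix id (Fin.natAdd K))ᵀ) + 1 := by
  ext j l
  simp only [grsGenMatrix, mul_apply, of_apply, transpose_apply, Fin.sum_univ_add,
    Fin.addCases_left, Fin.addCases_right, eval_lagrangeBasis_castAdd, one_mul, Pi.one_apply,
    transpose_submatrix, Matrix.add_apply, Matrix.smul_apply, submatrix_apply, id_eq, smul_eq_mul,
    mul_sum]
  rw [add_comm]
  congr 1
  · exact sum_congr rfl fun _ _ ↦ by ring
  · simp [one_apply]

end ReedSolomon

theorem exists_mds_lcd_code {F : Type*} [Field F] [Fintype F] {K R : ℕ} (hK : 1 ≤ K)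
    (hN : K + R ≤ Fintype.card F) (hq : 2 * K + 1 < Fintype.card F) :
    ∃ C : Submodule F (Fin (K + R) → F),
      Module.finrank F C = K ∧ IsLCD C ∧ hasMinDist C (R + 1) := by
  obtain ⟨a⟩ : Nonempty (Fin (K + R) ↪ F) :=
    Function.Embedding.nonempty_of_card_le (by simpa using hN)
  set A := (grsGenMatrix a 1).submatrix id (Fin.natAdd K)
  obtain ⟨t, ht, hdet⟩ :=
    exists_ne_zero_det_sq_smul_add_ne_zero (A * Aᵀ) 1 (by simp) (by simpa using hq)
  set v : Fin (K + R) → F := Fin.addCases (fun _ ↦ 1) fun _ ↦ t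
  have hv : ∀ i, v i ≠ 0 := Fin.addCases (fun _ ↦ by simp [v]) fun _ ↦ by simpa [v]
  exact ⟨_, finrank_range_grsGenMatrix a v hv,
    isLCD_range_vecMulLinear_s8 _ (by rwa [grsGenMatrix_mul_transpose]),
    hasMinDist_range_grsGenMatrix a v hK hv⟩

theorem exists_mds_lcd_of_dvd_general {F : Type*} [Field F] [Fintype F] {n k : ℕ}
    (hn : n ∣ (Fintype.card F - 1))
    (hk : k ≤ (n - 1) / 2) :
    ∀ k', 1 ≤ k' → k' ≤ k →
      ∃ C : Submodule F (Fin (n - k) → F),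
        Module.finrank F C = k' ∧ IsLCD C ∧ hasMinDist C ((n - k) - k' + 1) := by
  intro k' hk'1 hk'k
  have hF := Fintype.one_lt_card (α := F)
  have hn_le : n ≤ Fintype.card F - 1 := Nat.le_of_dvd (by omega) hn
  obtain ⟨R, hR⟩ : ∃ R, n - k = k' + R := ⟨n - k - k', by omega⟩
  rw [hR, Nat.add_sub_cancel_left]
  exact exists_mds_lcd_code hk'1 (by omega) (by omega)

/-- Let `q = p^m` with `p` prime and `m > 1`, let `n ∣ q - 1` and `k ≤ ⌊(n-1)/2⌋`.
Then for every `1 ≤ k' ≤ k` there exists an MDS LCD `[n - k, k']` code over `F_q`. -/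
theorem exists_mds_lcd_of_dvd {F : Type*} [Field F] [Fintype F] {p m n k : ℕ}
    (hp : p.Prime) (hm : 1 < m)
    (hq : Fintype.card F = p ^ m)
    (hn : n ∣ (Fintype.card F - 1))
    (hk : k ≤ (n - 1) / 2) :
    ∀ k', 1 ≤ k' → k' ≤ k →
      ∃ C : Submodule F (Fin (n - k) → F),
        Module.finrank F C = k' ∧ IsLCD C ∧ hasMinDist C ((n - k) - k' + 1) :=
  exists_mds_lcd_of_dvd_general hn hk
end

section
/- Let A be an n × n orthogonal matrix over F_q, let A_k be the k × n submatrix obtained by keeping any k rows of A, and let λ_1, …, λ_k ∈ F_q \ {0}. Then the row space of G = diag(λ_1, …, λ_k) · A_k is an LCD code of dimension k over F_q. -/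
/-- If `A` is an `n × n` orthogonal matrix over `F_q`, `A_k` keeps any `k` of its rows,
and `λ_1, …, λ_k` are nonzero, then the row space of `G = diag(λ_1, …, λ_k) · A_k` is an
LCD code of dimension `k`. -/
theorem lcd_of_scaled_orthogonal_rows {F : Type*} [Field F] [Fintype F] {n k : ℕ}
    (A : Matrix (Fin n) (Fin n) F) (hA : A * A.transpose = 1)
    (rows : Fin k → Fin n) (hrows : Function.Injective rows)
    (lam : Fin k → F) (hlam : ∀ i, lam i ≠ 0) :
    let G := Matrix.diagonal lam * A.submatrix rows id
    Module.finrank F (Submodule.span F (Set.range fun i => G i)) = k ∧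
      IsLCD (Submodule.span F (Set.range fun i => G i)) := by
  intro G
  have hG : ∀ i t, G i t = lam i * A (rows i) t := by
    intro i t
    simp [G, Matrix.diagonal_mul, Matrix.submatrix_apply]
  have key : ∀ i j, ∑ t, G i t * G j t = if i = j then lam i * lam i else 0 := by
    intro i j
    have h1 : ∑ t, G i t * G j t = lam i * lam j * ∑ t, A (rows i) t * A (rows j) t := by
      simp only [hG, Finset.mul_sum]; apply Finset.sum_congr rfl; intro t _; ring
    have h2 : ∑ t, A (rows i) t * A (rows j) t = (A * A.transpose) (rows i) (rows j) := by
      simp [Matrix.mul_apply, Matrix.transpose_apply]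
    rw [h1, h2, hA, Matrix.one_apply]
    by_cases h : i = j
    · subst h; simp
    · rw [if_neg (fun he => h (hrows he)), if_neg h, mul_zero]
  -- from a dot-product-zero condition derive vanishing coefficients
  have coeff_zero : ∀ (c : Fin k → F), (∀ j, ∑ t, (∑ i, c i • G i) t * G j t = 0) →
      ∀ j, c j = 0 := by
    intro c hc j
    have := hc j
    have hsum : ∑ t, (∑ i, c i • G i) t * G j t = c j * (lam j * lam j) := by
      simp only [Finset.sum_apply, Pi.smul_apply, smul_eq_mul, Finset.sum_mul]
      rw [Finset.sum_comm]
      have : ∀ i, ∑ t, c i * G i t * G j t = c i * ∑ t, G i t * G j t := by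
        intro i; rw [Finset.mul_sum]; apply Finset.sum_congr rfl; intro t _; ring
      simp only [this, key]
      simp
    rw [hsum] at this
    have hlj : lam j * lam j ≠ 0 := mul_ne_zero (hlam j) (hlam j)
    exact (mul_eq_zero.mp this).resolve_right hlj
  have hli : LinearIndependent F (fun i => G i) := by
    rw [Fintype.linearIndependent_iff]
    intro c hc j
    apply coeff_zero c _ j
    intro j'
    rw [hc]
    simp
  constructor
  · rw [finrank_span_eq_card hli, Fintype.card_fin]
  · rw [IsLCD, eq_bot_iff]
    intro x hx
    obtain ⟨hx1, hx2⟩ := hx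
    obtain ⟨c, hc⟩ := (Submodule.mem_span_range_iff_exists_fun F).mp hx1
    have hzero : ∀ j, c j = 0 := by
      apply coeff_zero
      intro j
      rw [hc]
      exact hx2 (G j) (Submodule.subset_span ⟨j, rfl⟩)
    have : x = 0 := by
      rw [← hc]
      simp [hzero]
    simp [this]
end

section
/- Let A be an n × n orthogonal matrix over F_q, let k be even, and let A_k be the k × n submatrix obtained by keeping any k rows of A. Let α_1, …, α_{k/2}, β_1, …, β_{k/2} ∈ F_q \ {0} with α_i² + β_i² ≠ 0 for each i, let D_i be the 2×2 matrix with rows (α_i, β_i) and (−β_i, α_i), and let λ_1, …, λ_k ∈ F_q \ {0}. Then the row space of G = diag(λ_1, …, λ_k) · blockdiag(D_1, …, D_{k/2}) · A_k is an LCD code of dimension k over F_q. -/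
/-- The block-diagonal matrix `blockdiag(D_1, …, D_t)` made of the `2 × 2` blocks
`D_i = [[α_i, β_i], [-β_i, α_i]]`. -/
def blockDiag2 {F : Type*} [CommRing F] {t : ℕ} (α β : Fin t → F) :
    Matrix (Fin (2 * t)) (Fin (2 * t)) F :=
  Matrix.of fun i j =>
    if (i : ℕ) / 2 = (j : ℕ) / 2 then
      if (i : ℕ) % 2 = 0 then
        if (j : ℕ) % 2 = 0 then α ⟨(i : ℕ) / 2, by have := i.isLt; omega⟩
        else β ⟨(i : ℕ) / 2, by have := i.isLt; omega⟩
      else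
        if (j : ℕ) % 2 = 0 then -β ⟨(i : ℕ) / 2, by have := i.isLt; omega⟩
        else α ⟨(i : ℕ) / 2, by have := i.isLt; omega⟩
    else 0

lemma blockDiag2_gram {F : Type*} [CommRing F] {t : ℕ} (α β : Fin t → F)
    (l j : Fin (2 * t)) :
    ∑ m, blockDiag2 α β l m * blockDiag2 α β j m =
      if l = j then
        α ⟨(l : ℕ) / 2, by have := l.isLt; omega⟩ ^ 2 +
        β ⟨(l : ℕ) / 2, by have := l.isLt; omega⟩ ^ 2
      else 0 := by
  by_cases hb : (l : ℕ) / 2 = (j : ℕ) / 2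
  · -- reduce to the two columns in the common block
    have hlt := l.isLt
    set m0 : Fin (2 * t) := ⟨2 * ((l : ℕ) / 2), by omega⟩ with hm0
    set m1 : Fin (2 * t) := ⟨2 * ((l : ℕ) / 2) + 1, by omega⟩ with hm1
    have hne01 : m0 ≠ m1 := by
      intro h; have := congrArg Fin.val h; simp [hm0, hm1] at this
    have hzero : ∀ m : Fin (2 * t), m ∉ ({m0, m1} : Finset (Fin (2 * t))) →
        blockDiag2 α β l m * blockDiag2 α β j m = 0 := by
      intro m hm
      have h0 : m ≠ m0 := by intro h; subst h; simp at hm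
      have h1 : m ≠ m1 := by intro h; subst h; simp at hm
      have hv0 : (m : ℕ) ≠ 2 * ((l : ℕ) / 2) := fun h => h0 (Fin.ext (by simp [hm0, h]))
      have hv1 : (m : ℕ) ≠ 2 * ((l : ℕ) / 2) + 1 := fun h => h1 (Fin.ext (by simp [hm1, h]))
      have hd : (l : ℕ) / 2 ≠ (m : ℕ) / 2 := by omega
      simp [blockDiag2, hd]
    rw [← Finset.sum_subset (Finset.subset_univ {m0, m1}) (fun m _ hm => hzero m hm),
      Finset.sum_pair hne01]
    have hm0v : (m0 : ℕ) / 2 = (l : ℕ) / 2 := by simp [hm0]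
    have hm0p : (m0 : ℕ) % 2 = 0 := by simp [hm0]
    have hm1v : (m1 : ℕ) / 2 = (l : ℕ) / 2 := by simp [hm1]; omega
    have hm1p : (m1 : ℕ) % 2 = 1 := by simp [hm1]
    by_cases hlj : l = j
    · subst hlj
      simp only [if_pos rfl]
      by_cases hp : (l : ℕ) % 2 = 0
      · simp [blockDiag2, hm0v, hm0p, hm1v, hm1p, hp]; ring
      · simp [blockDiag2, hm0v, hm0p, hm1v, hm1p, hp]; ring
    · have hvne : (l : ℕ) ≠ (j : ℕ) := fun h => hlj (Fin.ext h)
      simp only [if_neg hlj]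
      have hjb : (j : ℕ) / 2 = (l : ℕ) / 2 := hb.symm
      by_cases hp : (l : ℕ) % 2 = 0
      · have hjp : (j : ℕ) % 2 ≠ 0 := by omega
        simp [blockDiag2, hm0v, hm0p, hm1v, hm1p, hp, hjp, hjb]; ring
      · have hjp : (j : ℕ) % 2 = 0 := by omega
        simp [blockDiag2, hm0v, hm0p, hm1v, hm1p, hp, hjp, hjb]; ring
  · have hlj : l ≠ j := fun h => hb (by rw [h])
    rw [if_neg hlj]
    apply Finset.sum_eq_zero
    intro m _
    by_cases hm : (l : ℕ) / 2 = (m : ℕ) / 2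
    · have : (j : ℕ) / 2 ≠ (m : ℕ) / 2 := by omega
      simp [blockDiag2, this]
    · simp [blockDiag2, hm]

lemma gram_key {F : Type*} [Field F] {k n : ℕ} (M : Matrix (Fin k) (Fin n) F)
    (d : Fin k → F)
    (hg : ∀ l j, ∑ i, M l i * M j i = if l = j then d l else 0)
    (c : Fin k → F) (j : Fin k) :
    ∑ i, (∑ l, c l * M l i) * M j i = c j * d j := by
  have : ∑ i, (∑ l, c l * M l i) * M j i = ∑ l, c l * ∑ i, M l i * M j i := by
    simp_rw [Finset.sum_mul, Finset.mul_sum, mul_assoc]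
    rw [Finset.sum_comm]
  rw [this]
  simp [hg]

lemma gram_lcd {F : Type*} [Field F] {k n : ℕ} (M : Matrix (Fin k) (Fin n) F)
    (d : Fin k → F) (hd : ∀ i, d i ≠ 0)
    (hg : ∀ l j, ∑ i, M l i * M j i = if l = j then d l else 0) :
    Module.finrank F (Submodule.span F (Set.range fun i => M i)) = k ∧
      IsLCD (Submodule.span F (Set.range fun i => M i)) := by
  constructor
  · have hli : LinearIndependent F (fun i => M i) := by
      rw [Fintype.linearIndependent_iff]
      intro c hc j
      have hpt : ∀ i, ∑ l, c l * M l i = 0 := by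
        intro i
        have := congrFun hc i
        simpa using this
      have := gram_key M d hg c j
      simp only [hpt, zero_mul, Finset.sum_const_zero] at this
      exact (mul_eq_zero.mp this.symm).resolve_right (hd j)
    simpa using finrank_span_eq_card hli
  · rw [IsLCD, eq_bot_iff]
    rintro x ⟨hx1, hx2⟩
    obtain ⟨c, hc⟩ := (Submodule.mem_span_range_iff_exists_fun F).mp hx1
    have hxpt : ∀ i, x i = ∑ l, c l * M l i := by
      intro i
      rw [← hc]
      simp
    have hcz : ∀ j, c j = 0 := by
      intro j
      have hdual := hx2 (M j) (Submodule.subset_span ⟨j, rfl⟩)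
      have : ∑ i, (∑ l, c l * M l i) * M j i = 0 := by
        rw [← hdual]; congr 1; ext i; rw [hxpt i]
      rw [gram_key M d hg c j] at this
      exact (mul_eq_zero.mp this).resolve_right (hd j)
    have : x = 0 := by
      rw [← hc]
      simp [hcz]
    simp [this]

/-- Let `A` be an `n × n` orthogonal matrix over `F_q`, let `k = 2t` be even and `A_k`
keep any `k` rows of `A`. For nonzero `α_i, β_i` with `α_i² + β_i² ≠ 0` and nonzero
`λ_1, …, λ_k`, the row space of
`G = diag(λ_1, …, λ_k) · blockdiag(D_1, …, D_{k/2}) · A_k` is an LCD code of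
dimension `k`. -/
theorem lcd_of_block_scaled_orthogonal_rows_even {F : Type*} [Field F] [Fintype F]
    {n t : ℕ}
    (A : Matrix (Fin n) (Fin n) F) (hA : A * A.transpose = 1)
    (rows : Fin (2 * t) → Fin n) (hrows : Function.Injective rows)
    (lam : Fin (2 * t) → F) (hlam : ∀ i, lam i ≠ 0)
    (α β : Fin t → F) (hα : ∀ i, α i ≠ 0) (hβ : ∀ i, β i ≠ 0)
    (hαβ : ∀ i, α i ^ 2 + β i ^ 2 ≠ 0) :
    let G := Matrix.diagonal lam * blockDiag2 α β * A.submatrix rows id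
    Module.finrank F (Submodule.span F (Set.range fun i => G i)) = 2 * t ∧
      IsLCD (Submodule.span F (Set.range fun i => G i)) := by
  intro G
  have hGdef : G = Matrix.diagonal lam * blockDiag2 α β * A.submatrix rows id := rfl
  set As := A.submatrix rows id with hAs_def
  set DB := Matrix.diagonal lam * blockDiag2 α β with hDB
  -- A_k * A_kᵀ = 1
  have hAs : As * As.transpose = 1 := by
    ext m p
    have h := congrFun (congrFun hA (rows m)) (rows p)
    simp only [Matrix.mul_apply, Matrix.transpose_apply, Matrix.one_apply] at h ⊢
    simp only [hAs_def, Matrix.submatrix_apply, id_eq]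
    rw [h]
    simp [hrows.eq_iff]
  -- G * Gᵀ = DB * DBᵀ
  have hGG : G * G.transpose = DB * DB.transpose := by
    rw [hGdef, Matrix.transpose_mul, Matrix.mul_assoc, ← Matrix.mul_assoc As, hAs,
      Matrix.one_mul]
  -- the gram of G
  set d : Fin (2 * t) → F := fun l =>
    lam l * lam l * (α ⟨(l : ℕ) / 2, by have := l.isLt; omega⟩ ^ 2 +
      β ⟨(l : ℕ) / 2, by have := l.isLt; omega⟩ ^ 2) with hd_def
  have hd : ∀ l, d l ≠ 0 := by
    intro l
    exact mul_ne_zero (mul_ne_zero (hlam l) (hlam l)) (hαβ _)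
  have hgram : ∀ l j, ∑ i, G l i * G j i = if l = j then d l else 0 := by
    intro l j
    have h1 : ∑ i, G l i * G j i = (G * G.transpose) l j := by
      simp [Matrix.mul_apply]
    rw [h1, hGG]
    have h2 : (DB * DB.transpose) l j = ∑ m, (lam l * blockDiag2 α β l m) *
        (lam j * blockDiag2 α β j m) := by
      rw [Matrix.mul_apply]
      refine Finset.sum_congr rfl fun m _ => ?_
      rw [Matrix.transpose_apply, hDB, Matrix.diagonal_mul, Matrix.diagonal_mul]
    rw [h2]
    simp_rw [mul_mul_mul_comm]
    rw [← Finset.mul_sum, blockDiag2_gram]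
    by_cases hlj : l = j
    · subst hlj; simp [hd_def]
    · simp [hlj]
  exact gram_lcd G d hd hgram
end

section
/- Let A be an n × n orthogonal matrix over F_q, let k be odd, and let A_k be the k × n submatrix obtained by keeping any k rows of A. Let α_1, …, α_{(k−1)/2}, β_1, …, β_{(k−1)/2} ∈ F_q \ {0} with α_i² + β_i² ≠ 0 for each i, let D_i be the 2×2 matrix with rows (α_i, β_i) and (−β_i, α_i), and let λ_1, …, λ_k ∈ F_q \ {0}. Then the row space of G' = diag(λ_1, …, λ_k) · blockdiag(D_1, …, D_{(k−1)/2}, 1) · A_k is an LCD code of dimension k over F_q. -/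
/-- The block-diagonal matrix `blockdiag(D_1, …, D_t, 1)` made of the `2 × 2` blocks
`D_i = [[α_i, β_i], [-β_i, α_i]]` followed by a final `1 × 1` block equal to `1`. -/
def blockDiag2odd {F : Type*} [CommRing F] {t : ℕ} (α β : Fin t → F) :
    Matrix (Fin (2 * t + 1)) (Fin (2 * t + 1)) F :=
  Matrix.of fun i j =>
    if hi : (i : ℕ) < 2 * t then
      if hj : (j : ℕ) < 2 * t then blockDiag2 α β ⟨i, hi⟩ ⟨j, hj⟩ else 0
    else if (j : ℕ) < 2 * t then 0 else 1

lemma bd_zero {F : Type*} [CommRing F] {t : ℕ} (α β : Fin t → F)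
    (i l : Fin (2*t+1)) (hi : (i:ℕ) < 2*t)
    (h0 : (l:ℕ) ≠ 2*((i:ℕ)/2)) (h1 : (l:ℕ) ≠ 2*((i:ℕ)/2)+1) :
    blockDiag2odd α β i l = 0 := by
  simp only [blockDiag2odd, blockDiag2, Matrix.of_apply, Fin.val_mk]
  split_ifs <;> first | rfl | omega

lemma bd_apply {F : Type*} [CommRing F] {t : ℕ} (α β : Fin t → F)
    (i l : Fin (2*t+1)) (hi : (i:ℕ) < 2*t) (hl : (l:ℕ) < 2*t)
    (h : (i:ℕ)/2 = (l:ℕ)/2) (hi2 : (i:ℕ)/2 < t) :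
    blockDiag2odd α β i l =
      if (i:ℕ) % 2 = 0 then
        (if (l:ℕ) % 2 = 0 then α ⟨(i:ℕ)/2, hi2⟩ else β ⟨(i:ℕ)/2, hi2⟩)
      else
        (if (l:ℕ) % 2 = 0 then -β ⟨(i:ℕ)/2, hi2⟩ else α ⟨(i:ℕ)/2, hi2⟩) := by
  simp only [blockDiag2odd, blockDiag2, Matrix.of_apply, Fin.val_mk]
  rw [dif_pos hi, dif_pos hl, if_pos h]

lemma bd_last {F : Type*} [CommRing F] {t : ℕ} (α β : Fin t → F)
    (i l : Fin (2*t+1)) (hi : ¬ (i:ℕ) < 2*t) :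
    blockDiag2odd α β i l = if (l:ℕ) < 2*t then 0 else 1 := by
  simp only [blockDiag2odd, Matrix.of_apply]
  rw [dif_neg hi]

lemma bd_mul_transpose {F : Type*} [CommRing F] {t : ℕ} (α β : Fin t → F) :
    blockDiag2odd α β * (blockDiag2odd α β).transpose =
      Matrix.diagonal (fun i : Fin (2*t+1) => if h : (i:ℕ) < 2*t then
        α ⟨(i:ℕ)/2, by omega⟩^2 + β ⟨(i:ℕ)/2, by omega⟩^2 else 1) := by
  ext i j
  rw [Matrix.mul_apply, Matrix.diagonal_apply]
  simp only [Matrix.transpose_apply]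
  by_cases hi : (i:ℕ) < 2*t
  · have hi2 : (i:ℕ)/2 < t := by omega
    set l0 : Fin (2*t+1) := ⟨2*((i:ℕ)/2), by omega⟩ with hl0
    set l1 : Fin (2*t+1) := ⟨2*((i:ℕ)/2)+1, by omega⟩ with hl1
    have hl0v : (l0:ℕ) = 2*((i:ℕ)/2) := rfl
    have hl1v : (l1:ℕ) = 2*((i:ℕ)/2)+1 := rfl
    have hsum : ∑ l, blockDiag2odd α β i l * blockDiag2odd α β j l
        = ∑ l ∈ ({l0, l1} : Finset _), blockDiag2odd α β i l * blockDiag2odd α β j l := by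
      refine (Finset.sum_subset (Finset.subset_univ _) ?_).symm
      intro l _ hl
      simp only [Finset.mem_insert, Finset.mem_singleton] at hl
      push_neg at hl
      rw [bd_zero α β i l hi ?_ ?_, zero_mul]
      · intro h; exact hl.1 (Fin.ext h)
      · intro h; exact hl.2 (Fin.ext h)
    rw [hsum, Finset.sum_pair (by intro h; have := congrArg Fin.val h; rw [hl0v, hl1v] at this; omega)]
    rw [bd_apply α β i l0 hi (by omega) (by omega) hi2,
        bd_apply α β i l1 hi (by omega) (by omega) hi2]
    by_cases hj : (j:ℕ) < 2*t
    · by_cases hij : (i:ℕ)/2 = (j:ℕ)/2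
      · have hj2 : (j:ℕ)/2 < t := by omega
        rw [bd_apply α β j l0 hj (by omega) (by omega) hj2,
            bd_apply α β j l1 hj (by omega) (by omega) hj2]
        have hidx : (⟨(j:ℕ)/2, hj2⟩ : Fin t) = ⟨(i:ℕ)/2, hi2⟩ := Fin.ext hij.symm
        rw [hidx]
        have hp0 : (l0:ℕ) % 2 = 0 := by omega
        have hp1 : ¬ (l1:ℕ) % 2 = 0 := by omega
        rw [if_pos hp0, if_neg hp1, if_pos hp0, if_neg hp1]
        by_cases hpi : (i:ℕ) % 2 = 0 <;> by_cases hpj : (j:ℕ) % 2 = 0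
        · have hij' : i = j := Fin.ext (by omega)
          simp only [if_pos hpi, if_pos hpj, if_pos hij', dif_pos hi]; ring
        · have hij' : ¬ i = j := by intro h; subst h; omega
          simp only [if_pos hpi, if_neg hpj, if_neg hij']; ring
        · have hij' : ¬ i = j := by intro h; subst h; omega
          simp only [if_neg hpi, if_pos hpj, if_neg hij']; ring
        · have hij' : i = j := Fin.ext (by omega)
          simp only [if_neg hpi, if_neg hpj, if_pos hij', dif_pos hi]; ring
      · have hne : ¬ i = j := fun h => hij (by rw [h])
        rw [if_neg hne,
            bd_zero α β j l0 hj (by omega) (by omega),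
            bd_zero α β j l1 hj (by omega) (by omega)]
        ring
    · have hne : ¬ i = j := fun h => hj (by rw [← h]; exact hi)
      rw [if_neg hne, bd_last α β j l0 hj, bd_last α β j l1 hj,
          if_pos (show (l0:ℕ) < 2*t by omega), if_pos (show (l1:ℕ) < 2*t by omega)]
      ring
  · have hsum : ∑ l, blockDiag2odd α β i l * blockDiag2odd α β j l
        = ∑ l ∈ ({(⟨2*t, by omega⟩ : Fin (2*t+1))} : Finset _),
            blockDiag2odd α β i l * blockDiag2odd α β j l := by
      refine (Finset.sum_subset (Finset.subset_univ _) ?_).symm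
      intro l _ hl
      simp only [Finset.mem_singleton] at hl
      have hlv : (l:ℕ) < 2*t := by
        have := l.isLt
        rcases Nat.lt_or_ge (l:ℕ) (2*t) with h | h
        · exact h
        · exact absurd (Fin.ext (by omega : (l:ℕ) = 2*t)) hl
      rw [bd_last α β i l hi, if_pos hlv, zero_mul]
    rw [hsum, Finset.sum_singleton, bd_last α β i _ hi,
        if_neg (show ¬ (2*t : ℕ) < 2*t by omega)]
    by_cases hj : (j:ℕ) < 2*t
    · have hne : ¬ i = j := by intro h; subst h; omega
      have hz : blockDiag2odd α β j ⟨2*t, by omega⟩ = 0 := by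
        simp only [blockDiag2odd, Matrix.of_apply, Fin.val_mk]
        rw [dif_pos hj, dif_neg (by omega)]
      rw [if_neg hne, hz, mul_zero]
    · have heq : i = j := Fin.ext (by omega)
      rw [if_pos heq, dif_neg hi, bd_last α β j _ hj,
          if_neg (show ¬ (2*t:ℕ) < 2*t by omega), one_mul]

/-- Let `A` be an `n × n` orthogonal matrix over `F_q`, let `k = 2t + 1` be odd and
`A_k` keep any `k` rows of `A`. For nonzero `α_i, β_i` with `α_i² + β_i² ≠ 0` and
nonzero `λ_1, …, λ_k`, the row space of
`G' = diag(λ_1, …, λ_k) · blockdiag(D_1, …, D_{(k-1)/2}, 1) · A_k` is an LCD code of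
dimension `k`. -/

theorem lcd_of_block_scaled_orthogonal_rows_odd {F : Type*} [Field F] [Fintype F]
    {n t : ℕ}
    (A : Matrix (Fin n) (Fin n) F) (hA : A * A.transpose = 1)
    (rows : Fin (2 * t + 1) → Fin n) (hrows : Function.Injective rows)
    (lam : Fin (2 * t + 1) → F) (hlam : ∀ i, lam i ≠ 0)
    (α β : Fin t → F) (hα : ∀ i, α i ≠ 0) (hβ : ∀ i, β i ≠ 0)
    (hαβ : ∀ i, α i ^ 2 + β i ^ 2 ≠ 0) :
    let G' := Matrix.diagonal lam * blockDiag2odd α β * A.submatrix rows id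
    Module.finrank F (Submodule.span F (Set.range fun i => G' i)) = 2 * t + 1 ∧
      IsLCD (Submodule.span F (Set.range fun i => G' i)) := by
  intro G'
  set Ak : Matrix (Fin (2*t+1)) (Fin n) F := A.submatrix rows id with hAkdef
  have hAkAkT : Ak * Ak.transpose = 1 := by
    have h2 : Ak * Ak.transpose = (A * A.transpose).submatrix rows rows := by
      ext i j
      simp [Matrix.mul_apply, hAkdef]
    rw [h2, hA]
    ext i j
    simp [Matrix.one_apply, hrows.eq_iff]
  set s : Fin (2*t+1) → F := fun i => if h : (i:ℕ) < 2*t then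
      α ⟨(i:ℕ)/2, by omega⟩^2 + β ⟨(i:ℕ)/2, by omega⟩^2 else 1 with hsdef
  set dvec : Fin (2*t+1) → F := fun i => lam i * (s i * lam i) with hddef
  have hGG : G' * G'.transpose = Matrix.diagonal dvec := by
    show Matrix.diagonal lam * blockDiag2odd α β * Ak *
        (Matrix.diagonal lam * blockDiag2odd α β * Ak).transpose = _
    rw [Matrix.transpose_mul, Matrix.transpose_mul, Matrix.diagonal_transpose]
    simp only [Matrix.mul_assoc]
    rw [← Matrix.mul_assoc Ak Ak.transpose, hAkAkT, Matrix.one_mul,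
        ← Matrix.mul_assoc (blockDiag2odd α β) (blockDiag2odd α β).transpose,
        bd_mul_transpose α β, ← hsdef, Matrix.diagonal_mul_diagonal,
        Matrix.diagonal_mul_diagonal]
  have hs : ∀ i, s i ≠ 0 := by
    intro i
    rw [hsdef]
    dsimp only
    split_ifs with h
    · exact hαβ _
    · exact one_ne_zero
  have hd : ∀ i, dvec i ≠ 0 := fun i =>
    mul_ne_zero (hlam i) (mul_ne_zero (hs i) (hlam i))
  have hinv : Matrix.diagonal dvec * Matrix.diagonal (fun i => (dvec i)⁻¹) = 1 := by
    rw [Matrix.diagonal_mul_diagonal,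
        show (fun i => dvec i * (dvec i)⁻¹) = fun _ => (1:F) from
          funext fun i => mul_inv_cancel₀ (hd i), Matrix.diagonal_one]
  have hinv' : Matrix.diagonal (fun i => (dvec i)⁻¹) * Matrix.diagonal dvec = 1 := by
    rw [Matrix.diagonal_mul_diagonal,
        show (fun i => (dvec i)⁻¹ * dvec i) = fun _ => (1:F) from
          funext fun i => inv_mul_cancel₀ (hd i), Matrix.diagonal_one]
  have hvecMul : ∀ c : Fin (2*t+1) → F, Matrix.vecMul c (G' * G'.transpose) = 0 → c = 0 := by
    intro c hc
    rw [hGG] at hc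
    calc c = Matrix.vecMul c (Matrix.diagonal dvec * Matrix.diagonal fun i => (dvec i)⁻¹) := by
              rw [hinv, Matrix.vecMul_one]
      _ = Matrix.vecMul (Matrix.vecMul c (Matrix.diagonal dvec))
            (Matrix.diagonal fun i => (dvec i)⁻¹) := by rw [Matrix.vecMul_vecMul]
      _ = 0 := by rw [hc, Matrix.zero_vecMul]
  have hmulVec : ∀ c : Fin (2*t+1) → F, (G' * G'.transpose).mulVec c = 0 → c = 0 := by
    intro c hc
    rw [hGG] at hc
    calc c = ((Matrix.diagonal fun i => (dvec i)⁻¹) * Matrix.diagonal dvec).mulVec c := by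
              rw [hinv', Matrix.one_mulVec]
      _ = (Matrix.diagonal fun i => (dvec i)⁻¹).mulVec ((Matrix.diagonal dvec).mulVec c) := by
              rw [Matrix.mulVec_mulVec]
      _ = 0 := by rw [hc, Matrix.mulVec_zero]
  have hLI : LinearIndependent F (fun i => G' i) := by
    rw [Fintype.linearIndependent_iff]
    intro c hc
    have h1 : Matrix.vecMul c G' = 0 := by
      funext j
      have := congrFun hc j
      simpa [Matrix.vecMul, dotProduct, Finset.sum_apply] using this
    have h2 : Matrix.vecMul c (G' * G'.transpose) = 0 := by
      rw [← Matrix.vecMul_vecMul, h1, Matrix.zero_vecMul]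
    intro i
    exact congrFun (hvecMul c h2) i
  constructor
  · have := finrank_span_eq_card hLI
    simpa using this
  · rw [IsLCD, eq_bot_iff]
    intro x hx
    obtain ⟨hxC, hxD⟩ := Submodule.mem_inf.mp hx
    rw [Submodule.mem_bot]
    obtain ⟨c, hc⟩ := (Submodule.mem_span_range_iff_exists_fun F).mp hxC
    have hxg : Matrix.vecMul c G' = x := by
      funext j
      rw [← hc]
      simp [Matrix.vecMul, dotProduct, Finset.sum_apply]
    have hGx : G'.mulVec x = 0 := by
      funext j
      have hj := hxD (fun i => G' j i) (Submodule.subset_span ⟨j, rfl⟩)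
      simpa [Matrix.mulVec, dotProduct, mul_comm] using hj
    have h2 : (G' * G'.transpose).mulVec c = 0 := by
      rw [← Matrix.mulVec_mulVec,
          show G'.transpose.mulVec c = x from by rw [Matrix.mulVec_transpose, hxg]]
      exact hGx
    rw [← hxg, hmulVec c h2, Matrix.zero_vecMul]
end

section
/- Let G be a k × n matrix over F_q with G Gᵀ = I_k (its rows are orthonormal), and let C ⊆ F_q^n be the code it generates, with minimum distance d. Suppose there exist a, b ∈ F_q \ {0} with a² + b² = 0, and let λ_1, …, λ_k ∈ F_q be arbitrary. Let Ḡ be the k × (n+2) matrix obtained from G by appending to row j the two entries (λ_j a, λ_j b) when j is odd and (−λ_j b, λ_j a) when j is even. Then the row space of Ḡ is an LCD code of length n + 2, dimension k, and minimum distance ≥ d over F_q. -/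
section helpers
variable {F : Type*} [Field F] {k m : ℕ}

lemma dot_sum (v : Fin k → Fin m → F)
    (hv : ∀ j j', ∑ i, v j i * v j' i = if j = j' then 1 else 0)
    (g : Fin k → F) (j : Fin k) :
    ∑ i, (∑ j', g j' * v j' i) * v j i = g j := by
  calc ∑ i, (∑ j', g j' * v j' i) * v j i
      = ∑ j', g j' * ∑ i, v j' i * v j i := by
        simp_rw [Finset.sum_mul, Finset.mul_sum, mul_assoc]
        exact Finset.sum_comm
    _ = g j := by simp [hv]

lemma orth_li (v : Fin k → Fin m → F)
    (hv : ∀ j j', ∑ i, v j i * v j' i = if j = j' then 1 else 0) :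
    LinearIndependent F v := by
  rw [Fintype.linearIndependent_iff]
  intro g hg j
  have h0 : ∀ i, ∑ j', g j' * v j' i = 0 := by
    intro i
    have := congrFun hg i
    simpa using this
  have := dot_sum v hv g j
  simp only [h0, zero_mul, Finset.sum_const_zero] at this
  exact this.symm

lemma orth_lcd (v : Fin k → Fin m → F)
    (hv : ∀ j j', ∑ i, v j i * v j' i = if j = j' then 1 else 0) :
    IsLCD (Submodule.span F (Set.range v)) := by
  rw [IsLCD, eq_bot_iff]
  rintro x ⟨hx1, hx2⟩
  obtain ⟨g, hg⟩ := (Submodule.mem_span_range_iff_exists_fun F).1 hx1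
  have hzero : ∀ j, g j = 0 := by
    intro j
    have h1 : ∑ i, x i * v j i = 0 :=
      hx2 (v j) (Submodule.subset_span ⟨j, rfl⟩)
    have h2 : ∀ i, x i = ∑ j', g j' * v j' i := by
      intro i
      have := congrFun hg i
      simpa using this.symm
    rw [show (∑ i, x i * v j i) = ∑ i, (∑ j', g j' * v j' i) * v j i from by
      simp_rw [← h2], dot_sum v hv g j] at h1
    exact h1
  have : x = 0 := by
    rw [← hg]
    simp [hzero]
  simp [this]

end helpers

/-- Extension of an LCD code by two coordinates. Let `G` be a `k × n` matrix over `F_q`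
with orthonormal rows (`G Gᵀ = I`), generating a code of minimum distance `d`. Suppose
`a, b ≠ 0` satisfy `a² + b² = 0` and let `λ_1, …, λ_k` be arbitrary. Appending to the
`j`-th row of `G` the two entries `(λ_j a, λ_j b)` for `j` odd (first, third, … row) and
`(-λ_j b, λ_j a)` for `j` even yields a generator matrix of an LCD code of length
`n + 2`, dimension `k` and minimum distance at least `d`. -/
theorem lcd_extension_two_coordinates {F : Type*} [Field F] [Fintype F] {k n : ℕ}
    (G : Matrix (Fin k) (Fin n) F) (hG : G * G.transpose = 1)
    (d : ℕ) (hd : hasMinDist (Submodule.span F (Set.range fun j => G j)) d)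
    (a b : F) (ha : a ≠ 0) (hb : b ≠ 0) (hab : a ^ 2 + b ^ 2 = 0)
    (lam : Fin k → F) :
    let Gbar : Fin k → Fin (n + 2) → F := fun j =>
      Fin.append (G j)
        (fun i : Fin 2 =>
          if (j : ℕ) % 2 = 0 then (if i = 0 then lam j * a else lam j * b)
          else (if i = 0 then -(lam j * b) else lam j * a))
    IsLCD (Submodule.span F (Set.range Gbar)) ∧
      Module.finrank F (Submodule.span F (Set.range Gbar)) = k ∧
      ∀ c ∈ Submodule.span F (Set.range Gbar), c ≠ 0 → d ≤ wt c := by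
  intro Gbar
  -- orthonormality of rows of G
  have hGorth : ∀ j j', ∑ i, G j i * G j' i = if j = j' then 1 else 0 := by
    intro j j'
    have := congrFun (congrFun hG j) j'
    simpa [Matrix.mul_apply, Matrix.one_apply, Matrix.transpose_apply] using this
  -- the appended tail
  set e : Fin k → Fin 2 → F := fun j i =>
      if (j : ℕ) % 2 = 0 then (if i = 0 then lam j * a else lam j * b)
      else (if i = 0 then -(lam j * b) else lam j * a) with he
  have htail : ∀ j j', e j 0 * e j' 0 + e j 1 * e j' 1 = 0 := by
    intro j j'
    rcases Nat.mod_two_eq_zero_or_one (j : ℕ) with h1 | h1 <;>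
      rcases Nat.mod_two_eq_zero_or_one (j' : ℕ) with h2 | h2 <;>
      · simp only [he, h1, h2]
        norm_num
        first
        | linear_combination (lam j * lam j') * hab
        | linear_combination (-(lam j * lam j')) * hab
        | ring
  have hGbar : ∀ j, Gbar j = Fin.append (G j) (e j) := fun j => rfl
  have horth : ∀ j j', ∑ i, Gbar j i * Gbar j' i = if j = j' then 1 else 0 := by
    intro j j'
    rw [show (∑ i, Gbar j i * Gbar j' i)
        = (∑ i : Fin n, G j i * G j' i) + (e j 0 * e j' 0 + e j 1 * e j' 1) from by
      rw [Fin.sum_univ_add (f := fun i : Fin (n + 2) => Gbar j i * Gbar j' i)]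
      simp [hGbar, Fin.append_left, Fin.append_right, Fin.sum_univ_two]]
    rw [htail, add_zero, hGorth]
  refine ⟨orth_lcd Gbar horth, by simpa using finrank_span_eq_card (orth_li Gbar horth), ?_⟩
  -- minimum distance
  intro c hc hc0
  set L : (Fin (n + 2) → F) →ₗ[F] (Fin n → F) := LinearMap.funLeft F F (Fin.castAdd 2)
  have hLG : ∀ j, L (Gbar j) = G j := by
    intro j
    funext i
    simp [L, LinearMap.funLeft, hGbar, Fin.append_left]
  have hLc : L c ∈ Submodule.span F (Set.range fun j => G j) := by
    have : L c ∈ Submodule.map L (Submodule.span F (Set.range Gbar)) :=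
      Submodule.mem_map_of_mem hc
    rw [Submodule.map_span, ← Set.range_comp] at this
    convert this using 3
    funext j
    exact (hLG j).symm
  have hLc0 : L c ≠ 0 := by
    intro h0
    obtain ⟨g, hg⟩ := (Submodule.mem_span_range_iff_exists_fun F).1 hc
    have hgG : ∑ j, g j • G j = 0 := by
      rw [← h0, ← hg]
      simp [map_sum, hLG]
    have hli := orth_li (fun j => G j) hGorth
    have hz : ∀ j, g j = 0 := Fintype.linearIndependent_iff.1 hli g hgG
    apply hc0
    rw [← hg]
    simp [hz]
  have hd2 := hd.2 (L c) hLc hLc0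
  refine le_trans hd2 ?_
  classical
  apply Finset.card_le_card_of_injOn (fun i => Fin.castAdd 2 i)
  · intro i hi
    simp only [Finset.mem_filter, Finset.mem_univ, true_and] at hi ⊢
    simpa [L, LinearMap.funLeft] using hi
  · intro i _ i' _ hii'
    exact Fin.castAdd_injective _ _ hii'
end

section
/- Let C_1, …, C_l be linear codes of length n over F_q and let A be a non-singular l × l matrix over F_q. Then the Euclidean dual of the matrix-product code satisfies ([C_1, …, C_l]A)^⊥ = [C_1^⊥, …, C_l^⊥] (A^{−1})ᵀ. -/
/-- The matrix-product code `[C_1, …, C_l]A`: all `n × m` matrices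
`[c_1, …, c_l] · A` where the `i`-th column `c i` of the left factor belongs to `C i`. -/
def matrixProductCode {F : Type*} [Field F] {n l m : ℕ}
    (C : Fin l → Submodule F (Fin n → F)) (A : Matrix (Fin l) (Fin m) F) :
    Submodule F (Matrix (Fin n) (Fin m) F) where
  carrier := {X | ∃ c : Fin l → Fin n → F, (∀ i, c i ∈ C i) ∧
      X = (Matrix.of fun r i => c i r) * A}
  zero_mem' := ⟨0, fun i => (C i).zero_mem, by
    ext r j; simp [Matrix.mul_apply]⟩
  add_mem' := by
    rintro X Y ⟨c, hc, rfl⟩ ⟨c', hc', rfl⟩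
    refine ⟨c + c', fun i => (C i).add_mem (hc i) (hc' i), ?_⟩
    rw [← Matrix.add_mul]
    rfl
  smul_mem' := by
    rintro r X ⟨c, hc, rfl⟩
    refine ⟨r • c, fun i => (C i).smul_mem r (hc i), ?_⟩
    rw [← Matrix.smul_mul]
    rfl

/-- Euclidean dual of a code whose codewords are `n × m` matrices, with respect to
the inner product summing the entrywise products over all entries. -/
def dualMatCode {F : Type*} [Field F] {n m : ℕ}
    (C : Submodule F (Matrix (Fin n) (Fin m) F)) :
    Submodule F (Matrix (Fin n) (Fin m) F) where
  carrier := {X | ∀ Y ∈ C, ∑ r, ∑ j, X r j * Y r j = 0}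
  zero_mem' := by intro Y hY; simp
  add_mem' := by
    intro X X' hX hX' Y hY
    have h1 := hX Y hY
    have h2 := hX' Y hY
    simp only [Matrix.add_apply, add_mul, Finset.sum_add_distrib, h1, h2, add_zero]
  smul_mem' := by
    intro r X hX Y hY
    have h1 := hX Y hY
    simp only [Matrix.smul_apply, smul_eq_mul, mul_assoc, ← Finset.mul_sum, h1, mul_zero]

lemma sum_eq_trace {F : Type*} [CommRing F] {n m : ℕ} (X Y : Matrix (Fin n) (Fin m) F) :
    ∑ r, ∑ j, X r j * Y r j = (X.transpose * Y).trace := by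
  simp only [Matrix.trace, Matrix.diag, Matrix.mul_apply, Matrix.transpose_apply]
  rw [Finset.sum_comm]

/-- For non-singular `A`, the dual of a matrix-product code satisfies
`([C_1, …, C_l]A)^⊥ = [C_1^⊥, …, C_l^⊥] (A⁻¹)ᵀ`. -/
theorem dual_matrixProductCode {F : Type*} [Field F] [Fintype F] {n l : ℕ}
    (C : Fin l → Submodule F (Fin n → F)) (A : Matrix (Fin l) (Fin l) F)
    (hA : IsUnit A.det) :
    dualMatCode (matrixProductCode C A) =
      matrixProductCode (fun i => dualCode (C i)) A⁻¹.transpose := by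
  have hAT : IsUnit A.transpose.det := by rwa [Matrix.det_transpose]
  ext X
  constructor
  · intro hX
    refine ⟨fun i r => (X * A.transpose) r i, fun i => ?_, ?_⟩
    · intro c hc
      have hmem : (Matrix.of fun r j => (fun k => if k = i then c else 0) j r) * A ∈
          matrixProductCode C A := by
        refine ⟨fun k => if k = i then c else 0, fun j => ?_, rfl⟩
        by_cases h : j = i <;> simp [h, hc, (C j).zero_mem]
      have h := hX _ hmem
      rw [← h]
      apply Finset.sum_congr rfl
      intro r _
      simp only [Matrix.mul_apply, Matrix.of_apply, Matrix.transpose_apply, ite_apply,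
        Pi.zero_apply, ite_mul, zero_mul, Finset.sum_ite_eq', Finset.mem_univ, if_true,
        Finset.sum_mul]
      apply Finset.sum_congr rfl
      intro j _
      ring
    · have heq : (Matrix.of fun r i => (fun i r => (X * A.transpose) r i) i r) =
          X * A.transpose := rfl
      rw [heq, Matrix.transpose_nonsing_inv,
        Matrix.mul_nonsing_inv_cancel_right _ _ hAT]
  · rintro ⟨d, hd, rfl⟩ Y ⟨c, hc, rfl⟩
    rw [sum_eq_trace, Matrix.transpose_mul, Matrix.transpose_transpose]
    have key : A⁻¹ * (Matrix.of fun r i => d i r).transpose *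
        ((Matrix.of fun r i => c i r) * A) =
        A⁻¹ * ((Matrix.of fun r i => d i r).transpose * (Matrix.of fun r i => c i r) * A) := by
      simp only [Matrix.mul_assoc]
    rw [key, Matrix.trace_mul_comm, Matrix.mul_assoc, Matrix.mul_nonsing_inv _ hA,
      Matrix.mul_one]
    simp only [Matrix.trace, Matrix.diag, Matrix.mul_apply, Matrix.transpose_apply,
      Matrix.of_apply]
    exact Finset.sum_eq_zero fun i _ => hd i (c i) (hc i)
end

section
/- Let C_1, C_2, …, C_l be linear codes of length n over F_q and let A be an l × l orthogonal matrix over F_q (A Aᵀ = I_l). Then the matrix-product code C = [C_1, C_2, …, C_l]A is LCD if and only if C_1, C_2, …, C_l are all LCD codes. -/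
/-- LCD property for codes of matrix codewords. -/
def IsLCDMat {F : Type*} [Field F] {n m : ℕ}
    (C : Submodule F (Matrix (Fin n) (Fin m) F)) : Prop :=
  C ⊓ dualMatCode C = ⊥

/-!
Right multiplication by an orthogonal matrix `A` is a linear automorphism of the space of
`n × l` matrices preserving the entrywise pairing `∑ X r j * Y r j = tr (X Yᵀ)`. It maps
`[C_1, …, C_l]I` onto `[C_1, …, C_l]A`, hence the dual of the one onto the dual of the other,
so both codes are LCD or neither is. For `A = I` the code consists of the matrices whose `i`-th
column lies in `C_i`, its dual of those whose `i`-th column lies in `C_iᗮ`, and a matrix lies in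
both exactly when each column lies in `C_i ∩ C_iᗮ`.
-/

open Matrix

theorem Matrix.sum_sum_mul_mul_right_of_mul_transpose_eq_one {R : Type*} [CommSemiring R]
    {n m k : Type*} [Fintype n] [Fintype m] [Fintype k] [DecidableEq m]
    {A : Matrix m k R} (hA : A * Aᵀ = 1) (X Y : Matrix n m R) :
    ∑ r, ∑ j, (X * A) r j * (Y * A) r j = ∑ r, ∑ j, X r j * Y r j :=
  calc _ = trace (X * A * (Y * A)ᵀ) := sum_hadamard_eq _ _
    _ = trace (X * Yᵀ) := by
      rw [transpose_mul, Matrix.mul_assoc, ← Matrix.mul_assoc A, hA, Matrix.one_mul]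
    _ = _ := (sum_hadamard_eq _ _).symm

section Isometry

variable {F : Type*} [Field F] {n m : ℕ}
  (e : Matrix (Fin n) (Fin m) F ≃ₗ[F] Matrix (Fin n) (Fin m) F)
  (W : Submodule F (Matrix (Fin n) (Fin m) F))

theorem dualMatCode_map_of_isometry
    (he : ∀ X Y, ∑ r, ∑ j, e X r j * e Y r j = ∑ r, ∑ j, X r j * Y r j) :
    dualMatCode (W.map e.toLinearMap) = (dualMatCode W).map e.toLinearMap := by
  ext X
  obtain ⟨X, rfl⟩ := e.surjective X
  simp only [Submodule.mem_map_equiv, LinearEquiv.symm_apply_apply]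
  constructor
  · intro hX Y hY
    rw [← he]
    exact hX (e Y) (Submodule.mem_map_of_mem hY)
  · rintro hX _ ⟨Y, hY, rfl⟩
    exact (he X Y).trans (hX Y hY)

theorem isLCDMat_map_iff_of_isometry
    (he : ∀ X Y, ∑ r, ∑ j, e X r j * e Y r j = ∑ r, ∑ j, X r j * Y r j) :
    IsLCDMat (W.map e.toLinearMap) ↔ IsLCDMat W := by
  rw [IsLCDMat, IsLCDMat, dualMatCode_map_of_isometry e W he,
    ← Submodule.map_inf _ e.injective, Submodule.map_eq_bot_iff]

end Isometry

section MatrixProductCode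

variable {F : Type*} [Field F] {n l : ℕ}

def mulRightOrthogonal {A : Matrix (Fin l) (Fin l) F} (hA : A * Aᵀ = 1) :
    Matrix (Fin n) (Fin l) F ≃ₗ[F] Matrix (Fin n) (Fin l) F where
  toFun X := X * A
  invFun X := X * Aᵀ
  map_add' X Y := Matrix.add_mul X Y A
  map_smul' c X := Matrix.smul_mul c X A
  left_inv X := by dsimp only; rw [Matrix.mul_assoc, hA, Matrix.mul_one]
  right_inv X := by dsimp only; rw [Matrix.mul_assoc, mul_eq_one_comm.mp hA, Matrix.mul_one]

theorem mulRightOrthogonal_apply {A : Matrix (Fin l) (Fin l) F} (hA : A * Aᵀ = 1)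
    (X : Matrix (Fin n) (Fin l) F) : mulRightOrthogonal hA X = X * A :=
  rfl

theorem sum_sum_mulRightOrthogonal_apply_mul {A : Matrix (Fin l) (Fin l) F}
    (hA : A * Aᵀ = 1) (X Y : Matrix (Fin n) (Fin l) F) :
    ∑ r, ∑ j, mulRightOrthogonal hA X r j * mulRightOrthogonal hA Y r j =
      ∑ r, ∑ j, X r j * Y r j :=
  sum_sum_mul_mul_right_of_mul_transpose_eq_one hA X Y

theorem matrixProductCode_eq_map_mulRightOrthogonal (C : Fin l → Submodule F (Fin n → F))
    {A : Matrix (Fin l) (Fin l) F} (hA : A * Aᵀ = 1) :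
    matrixProductCode C A =
      (matrixProductCode C (1 : Matrix (Fin l) (Fin l) F)).map
        (mulRightOrthogonal hA).toLinearMap := by
  ext X
  constructor
  · rintro ⟨c, hc, rfl⟩
    exact ⟨_, ⟨c, hc, (Matrix.mul_one _).symm⟩, rfl⟩
  · rintro ⟨_, ⟨c, hc, rfl⟩, rfl⟩
    exact ⟨c, hc, by rw [LinearEquiv.coe_coe, mulRightOrthogonal_apply, Matrix.mul_one]⟩

theorem mem_matrixProductCode_one_iff (C : Fin l → Submodule F (Fin n → F))
    (X : Matrix (Fin n) (Fin l) F) :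
    X ∈ matrixProductCode C (1 : Matrix (Fin l) (Fin l) F) ↔
      ∀ i, (fun r => X r i) ∈ C i := by
  constructor
  · rintro ⟨c, hc, rfl⟩ i
    simpa using hc i
  · intro hX
    exact ⟨fun i r => X r i, hX, by ext r i; simp⟩

theorem updateCol_zero_col_mem {D : Fin l → Submodule F (Fin n → F)} {i : Fin l}
    {v : Fin n → F} (hv : v ∈ D i) (j : Fin l) :
    (fun r => updateCol (0 : Matrix (Fin n) (Fin l) F) i v r j) ∈ D j := by
  rcases eq_or_ne j i with rfl | hji
  · simpa only [updateCol_self] using hv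
  · simp only [updateCol_ne hji]
    exact (D j).zero_mem

theorem mem_dualMatCode_matrixProductCode_one_iff (C : Fin l → Submodule F (Fin n → F))
    (X : Matrix (Fin n) (Fin l) F) :
    X ∈ dualMatCode (matrixProductCode C (1 : Matrix (Fin l) (Fin l) F)) ↔
      ∀ i, (fun r => X r i) ∈ dualCode (C i) := by
  constructor
  · intro hX i c hc
    have hc' := hX (updateCol 0 i c)
      ((mem_matrixProductCode_one_iff C _).mpr (updateCol_zero_col_mem hc))
    simpa [updateCol_apply] using hc'
  · rintro hX _ ⟨c, hc, rfl⟩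
    rw [Finset.sum_comm]
    exact Finset.sum_eq_zero fun i _ => by simpa using hX i (c i) (hc i)

theorem isLCDMat_matrixProductCode_one_iff (C : Fin l → Submodule F (Fin n → F)) :
    IsLCDMat (matrixProductCode C (1 : Matrix (Fin l) (Fin l) F)) ↔ ∀ i, IsLCD (C i) := by
  simp only [IsLCDMat, IsLCD, Submodule.eq_bot_iff, Submodule.mem_inf,
    mem_matrixProductCode_one_iff, mem_dualMatCode_matrixProductCode_one_iff]
  constructor
  · intro h i v hv
    have hcol := updateCol_zero_col_mem (D := fun j => C j ⊓ dualCode (C j)) hv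
    have h0 := h (updateCol 0 i v) ⟨fun j => (hcol j).1, fun j => (hcol j).2⟩
    funext r
    simpa using congrFun (congrFun h0 r) i
  · intro h X ⟨hXC, hXD⟩
    ext r i
    exact congrFun (h i _ ⟨hXC i, hXD i⟩) r

end MatrixProductCode

theorem matrixProductCode_lcd_iff_general {F : Type*} [Field F] {n l : ℕ}
    (C : Fin l → Submodule F (Fin n → F)) (A : Matrix (Fin l) (Fin l) F)
    (hA : A * A.transpose = 1) :
    IsLCDMat (matrixProductCode C A) ↔ ∀ i, IsLCD (C i) := by
  rw [matrixProductCode_eq_map_mulRightOrthogonal C hA,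
    isLCDMat_map_iff_of_isometry _ _ (sum_sum_mulRightOrthogonal_apply_mul hA),
    isLCDMat_matrixProductCode_one_iff]

/-- For an orthogonal matrix `A`, the matrix-product code `[C_1, …, C_l]A` is LCD if
and only if all the codes `C_1, …, C_l` are LCD. -/
theorem matrixProductCode_lcd_iff {F : Type*} [Field F] [Fintype F] {n l : ℕ}
    (C : Fin l → Submodule F (Fin n → F)) (A : Matrix (Fin l) (Fin l) F)
    (hA : A * A.transpose = 1) :
    IsLCDMat (matrixProductCode C A) ↔ ∀ i, IsLCD (C i) :=
  matrixProductCode_lcd_iff_general C A hA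
end

section
/- Let C_1, C_2, …, C_l be linear codes of length n over F_q, let A be an l × l orthogonal matrix over F_q, let a_1, …, a_l ∈ F_q \ {0}, and set Ā = diag(a_1, …, a_l) · A. Then the matrix-product code C = [C_1, C_2, …, C_l]Ā is LCD if and only if C_1, C_2, …, C_l are all LCD codes. -/
private theorem mpLCD_inner_formula {F : Type*} [Field F] {n l : ℕ}
    (Ab : Matrix (Fin l) (Fin l) F) (b : Fin l → F)
    (hAb : Ab * Ab.transpose = Matrix.diagonal b)
    (c d : Fin l → Fin n → F) :
    ∑ r, ∑ j, ((Matrix.of fun r i => c i r) * Ab) r j *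
      ((Matrix.of fun r i => d i r) * Ab) r j
      = ∑ i, b i * ∑ r, c i r * d i r := by
  have key : ∀ r : Fin n, ∑ j, ((Matrix.of fun r i => c i r) * Ab) r j *
      ((Matrix.of fun r i => d i r) * Ab) r j = ∑ i, b i * (c i r * d i r) := by
    intro r
    have h1 : ∑ j, ((Matrix.of fun r i => c i r) * Ab) r j *
        ((Matrix.of fun r i => d i r) * Ab) r j
        = ((Matrix.of fun r i => c i r) * Ab *
            ((Matrix.of fun r i => d i r) * Ab).transpose) r r := by
      simp [Matrix.mul_apply, mul_comm]
    rw [h1, Matrix.transpose_mul, ← Matrix.mul_assoc, Matrix.mul_assoc _ Ab, hAb]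
    rw [Matrix.mul_apply]
    simp only [Matrix.mul_diagonal, Matrix.transpose_apply, Matrix.of_apply]
    exact Finset.sum_congr rfl fun i _ => by ring
  rw [Finset.sum_congr rfl fun r _ => key r, Finset.sum_comm]
  exact Finset.sum_congr rfl fun i _ => by rw [Finset.mul_sum]

/-- For an orthogonal matrix `A` and nonzero scalars `a_1, …, a_l`, with
`Ā = diag(a_1, …, a_l) · A`, the matrix-product code `[C_1, …, C_l]Ā` is LCD if and
only if all the codes `C_1, …, C_l` are LCD. -/
theorem matrixProductCode_scaled_lcd_iff {F : Type*} [Field F] [Fintype F] {n l : ℕ}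
    (C : Fin l → Submodule F (Fin n → F)) (A : Matrix (Fin l) (Fin l) F)
    (hA : A * A.transpose = 1)
    (a : Fin l → F) (ha : ∀ i, a i ≠ 0) :
    IsLCDMat (matrixProductCode C (Matrix.diagonal a * A)) ↔ ∀ i, IsLCD (C i) := by
  classical
  set Ab := Matrix.diagonal a * A with hAbdef
  set b : Fin l → F := fun i => a i * a i with hbdef
  have hb : ∀ i, b i ≠ 0 := fun i => mul_ne_zero (ha i) (ha i)
  have hAb : Ab * Ab.transpose = Matrix.diagonal b := by
    rw [hAbdef, Matrix.transpose_mul, Matrix.diagonal_transpose, ← Matrix.mul_assoc,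
      Matrix.mul_assoc (Matrix.diagonal a) A, hA, Matrix.mul_one,
      Matrix.diagonal_mul_diagonal]
  set Binv := Ab.transpose * Matrix.diagonal (fun i => (b i)⁻¹) with hBdef
  have hABinv : Ab * Binv = 1 := by
    rw [hBdef, ← Matrix.mul_assoc, hAb, Matrix.diagonal_mul_diagonal,
      show (fun i => b i * (b i)⁻¹) = fun _ => (1 : F) from
        funext fun i => mul_inv_cancel₀ (hb i), Matrix.diagonal_one]
  have hBinvA : Binv * Ab = 1 := mul_eq_one_comm.mp hABinv
  have hcancel : ∀ M : Matrix (Fin n) (Fin l) F, M * Ab = 0 → M = 0 := by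
    intro M h
    have h2 := congrArg (· * Binv) h
    simpa [Matrix.mul_assoc, hABinv] using h2
  have hmemMP : ∀ (D : Fin l → Submodule F (Fin n → F)) (X : Matrix (Fin n) (Fin l) F),
      X ∈ matrixProductCode D Ab ↔ ∃ c : Fin l → Fin n → F, (∀ i, c i ∈ D i) ∧
        X = (Matrix.of fun r i => c i r) * Ab := fun _ _ => Iff.rfl
  have hmemDual : ∀ (S : Submodule F (Matrix (Fin n) (Fin l) F))
      (X : Matrix (Fin n) (Fin l) F),
      X ∈ dualMatCode S ↔ ∀ Y ∈ S, ∑ r, ∑ j, X r j * Y r j = 0 := fun _ _ => Iff.rfl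
  have hdual : dualMatCode (matrixProductCode C Ab)
      = matrixProductCode (fun i => dualCode (C i)) Ab := by
    apply le_antisymm
    · intro X hX
      set c : Fin l → Fin n → F := fun i r => (X * Binv) r i with hc
      have hXeq : X = (Matrix.of fun r i => c i r) * Ab := by
        have h3 : (Matrix.of fun r i => c i r) = X * Binv := rfl
        rw [h3, Matrix.mul_assoc, hBinvA, Matrix.mul_one]
      refine (hmemMP _ X).mpr ⟨c, ?_, hXeq⟩
      intro i d hd
      have hY : ((Matrix.of fun r k => (Pi.single i d : Fin l → Fin n → F) k r) * Ab) ∈ matrixProductCode C Ab := by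
        refine (hmemMP C _).mpr ⟨(Pi.single i d : Fin l → Fin n → F), ?_, rfl⟩
        intro k
        by_cases hk : k = i
        · subst hk; simpa using hd
        · simp [Pi.single_apply, hk]
      have h0 := (hmemDual _ X).mp hX _ hY
      rw [hXeq, mpLCD_inner_formula Ab b hAb c ((Pi.single i d : Fin l → Fin n → F))] at h0
      have hsum : ∑ k, b k * ∑ r, c k r * (Pi.single i d : Fin l → Fin n → F) k r
          = b i * ∑ r, c i r * d r := by
        rw [Finset.sum_eq_single i]
        · simp
        · intro k _ hk
          simp [Pi.single_apply, hk]
        · intro h; exact absurd (Finset.mem_univ i) h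
      rw [hsum] at h0
      rcases mul_eq_zero.mp h0 with h | h
      · exact absurd h (hb i)
      · exact h
    · intro X hX
      obtain ⟨c, hc, rfl⟩ := (hmemMP _ X).mp hX
      refine (hmemDual _ _).mpr ?_
      intro Y hY
      obtain ⟨d, hd, rfl⟩ := (hmemMP C Y).mp hY
      rw [mpLCD_inner_formula Ab b hAb c d]
      refine Finset.sum_eq_zero fun i _ => ?_
      rw [hc i (d i) (hd i), mul_zero]
  constructor
  · intro hLCD i
    have hL : matrixProductCode C Ab ⊓ dualMatCode (matrixProductCode C Ab) = ⊥ := hLCD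
    show C i ⊓ dualCode (C i) = ⊥
    rw [eq_bot_iff]
    intro x hx
    obtain ⟨hx1, hx2⟩ := Submodule.mem_inf.mp hx
    set X := (Matrix.of fun r k => (Pi.single i x : Fin l → Fin n → F) k r) * Ab with hXdef
    have h1 : X ∈ matrixProductCode C Ab := by
      refine (hmemMP C X).mpr ⟨(Pi.single i x : Fin l → Fin n → F), ?_, rfl⟩
      intro k
      by_cases hk : k = i
      · subst hk; simpa using hx1
      · simp [Pi.single_apply, hk]
    have h2 : X ∈ dualMatCode (matrixProductCode C Ab) := by
      rw [hdual]
      refine (hmemMP _ X).mpr ⟨(Pi.single i x : Fin l → Fin n → F), ?_, rfl⟩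
      intro k
      by_cases hk : k = i
      · subst hk; simpa using hx2
      · simp [Pi.single_apply, hk]
    have hX0 : X = 0 := by
      have := hL ▸ Submodule.mem_inf.mpr ⟨h1, h2⟩
      exact (Submodule.mem_bot F).mp this
    have hM0 : (Matrix.of fun r k => (Pi.single i x : Fin l → Fin n → F) k r) = 0 := hcancel _ (hXdef ▸ hX0)
    have hx0 : x = 0 := by
      funext r
      have := congrFun (congrFun hM0 r) i
      simpa using this
    simp [hx0]
  · intro hall
    show matrixProductCode C Ab ⊓ dualMatCode (matrixProductCode C Ab) = ⊥
    rw [eq_bot_iff]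
    intro X hX
    obtain ⟨h1, h2⟩ := Submodule.mem_inf.mp hX
    rw [hdual] at h2
    obtain ⟨c, hc, hXeq⟩ := (hmemMP C X).mp h1
    obtain ⟨c', hc', hXeq'⟩ := (hmemMP _ X).mp h2
    have hM : (Matrix.of fun r i => c i r) = (Matrix.of fun r i => c' i r) := by
      have hsub : ((Matrix.of fun r i => c i r) - (Matrix.of fun r i => c' i r)) * Ab = 0 := by
        rw [Matrix.sub_mul, ← hXeq, ← hXeq', sub_self]
      exact sub_eq_zero.mp (hcancel _ hsub)
    have hc0 : ∀ i, c i = 0 := by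
      intro i
      have hLi : C i ⊓ dualCode (C i) = ⊥ := hall i
      have hmem : c i ∈ C i ⊓ dualCode (C i) := by
        refine Submodule.mem_inf.mpr ⟨hc i, ?_⟩
        have hcc : c i = c' i := funext fun r => congrFun (congrFun hM r) i
        rw [hcc]; exact hc' i
      rw [hLi] at hmem
      exact (Submodule.mem_bot F).mp hmem
    have hMz : (Matrix.of fun r i => c i r) = 0 := by
      ext r i; simp [hc0 i]
    rw [hXeq, hMz, Matrix.zero_mul]
    exact Submodule.zero_mem ⊥
end
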